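/- arXiv:1207.1159 — 10 statements merged into one kernel-verified Lean document; each statement's English description precedes it below -/
import Mathlib

section
/- For all integers n > r ≥ 0 and m ≥ 1, one has Σ_{i=0}^{m−1} C(m−i+r, r)·C(i+n−r−1, n−r−1) = C(m+n, n) − C(m+n−r−1, n−r−1); that is, c_{n,r,m,m} = C(m+n, n) − C(m+n−r−1, n−r−1). -/
/-- `c_{n,r,m,t} = Σ_{i=0}^{m−1} C(t−i+r, r)·C(i+n−r−1, n−r−1)`. -/
def cConst (n r m t : ℕ) : ℕ :=
  ∑ i ∈ Finset.range m, Nat.choose (t - i + r) r * Nat.choose (i + n - r - 1) (n - r - 1)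

/-!
Since `Σ_k C(a+k, a) X^k = (1 - X)^{-(a+1)}`, comparing coefficients of `X^m` in
`(1 - X)^{-(r+1)} (1 - X)^{-(s+1)} = (1 - X)^{-(r+s+2)}` gives
`Σ_{i+j=m} C(s+i, s) C(r+j, r) = C(m+r+s+1, r+s+1)`. With `n = r + s + 1`, `c_{n,r,m,m}` is this
convolution without its term `j = 0`, which is `C(m+s, s) = C(m+n-r-1, n-r-1)`.
-/

open Finset PowerSeries

theorem Nat.sum_antidiagonal_add_choose_mul_add_choose (a b m : ℕ) :
    ∑ p ∈ antidiagonal m, (a + p.1).choose a * (b + p.2).choose b =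
      (a + b + 1 + m).choose (a + b + 1) := by
  have h := congrArg (coeff m) (mk_one_pow_eq_mk_choose_add ℤ (a + b + 1))
  rw [show a + b + 1 + 1 = (a + 1) + (b + 1) by ring, pow_add, mk_one_pow_eq_mk_choose_add,
    mk_one_pow_eq_mk_choose_add] at h
  simp only [coeff_mul, coeff_mk] at h
  exact_mod_cast h

theorem cConst_add_choose (r s m : ℕ) :
    cConst (r + s + 1) r m m + (s + m).choose s = (r + s + 1 + m).choose (r + s + 1) := by
  have h := Nat.sum_antidiagonal_add_choose_mul_add_choose s r m
  rw [add_comm s r] at h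
  rw [← h,
    Nat.sum_antidiagonal_eq_sum_range_succ (fun i j => (s + i).choose s * (r + j).choose r),
    sum_range_succ, Nat.sub_self, add_zero, Nat.choose_self, mul_one, cConst]
  congr 1
  refine sum_congr rfl fun i _ => ?_
  rw [mul_comm, show i + (r + s + 1) - r - 1 = s + i by omega,
    show r + s + 1 - r - 1 = s by omega, add_comm (m - i)]

theorem stmt_1_general (n r m : ℕ) (hrn : r < n) :
    (cConst n r m m : ℤ) =
      (Nat.choose (m + n) n : ℤ) - (Nat.choose (m + n - r - 1) (n - r - 1) : ℤ) := by
  obtain ⟨s, rfl⟩ : ∃ s, n = r + s + 1 := ⟨n - r - 1, by omega⟩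
  have h := cConst_add_choose r s m
  rw [show m + (r + s + 1) - r - 1 = s + m by omega, show r + s + 1 - r - 1 = s by omega,
    add_comm m]
  omega

/-- For all integers `n > r ≥ 0` and `m ≥ 1`,
`c_{n,r,m,m} = Σ_{i=0}^{m−1} C(m−i+r, r)·C(i+n−r−1, n−r−1) = C(m+n, n) − C(m+n−r−1, n−r−1)`. -/
theorem stmt_1 (n r m : ℕ) (hrn : r < n) (hm : 1 ≤ m) :
    (cConst n r m m : ℤ) =
      (Nat.choose (m + n) n : ℤ) - (Nat.choose (m + n - r - 1) (n - r - 1) : ℤ) :=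
  stmt_1_general n r m hrn
end

section
/- Let k be an algebraically closed field, let n > r ≥ 0 and s ≥ 1 be integers, and let L_1,…,L_s be pairwise disjoint r-dimensional linear subspaces of P^n over k. Let m_1,…,m_s ≥ 1 be integers, set m := max_i m_i, and let t ≥ m be an integer. If C(t+n, n) − Σ_{i=1}^s c_{n,r,m_i,t} > 0, then the ideal I := I(L_1)^{m_1} ∩ … ∩ I(L_s)^{m_s} contains a nonzero homogeneous polynomial of degree t; in particular α(I) ≤ t. -/
/-- The homogeneous ideal of all polynomials in `k[x_0,…,x_n]` vanishing on a linear
subspace `W ⊆ k^{n+1}`. -/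
def vanishingIdeal (k : Type*) [Field k] (n : ℕ) (W : Submodule k (Fin (n + 1) → k)) :
    Ideal (MvPolynomial (Fin (n + 1)) k) where
  carrier := {f | ∀ x ∈ W, MvPolynomial.eval x f = 0}
  add_mem' := by
    intro a b ha hb x hx
    simp [ha x hx, hb x hx]
  zero_mem' := by
    intro x hx
    simp
  smul_mem' := by
    intro c f hf x hx
    simp [smul_eq_mul, hf x hx]

/-- `α(J)`: least degree of a nonzero homogeneous polynomial in `J`. -/
noncomputable def alphaDeg {k : Type*} [Field k] {n : ℕ}
    (J : Ideal (MvPolynomial (Fin (n + 1)) k)) : ℕ :=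
  sInf {t | ∃ f ∈ J, f ≠ 0 ∧ MvPolynomial.IsHomogeneous f t}

/-!
In coordinates adapted to `L`, i.e. after a linear change of variables `u` carrying the
coordinate subspace `{x_j = 0, j ∈ S}` (`#S = n - r`) onto `L`, a form lies in `I(L)^m` as soon as
each of its monomials has degree at least `m` in the variables `x_j`, `j ∈ S`. Among the
`C(t+n, n)` monomials of degree `t`, at most `c_{n,r,m,t}` have degree `a < m` in these variables
(choose a monomial of degree `t - a` in the `r + 1` other variables and one of degree `a` in
the `n - r` variables of `S`). Asking that these coefficients of `f ∘ u_i` vanish for every `i`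
imposes at most `Σ_i c_{n,r,m_i,t} < C(t+n, n)` linear conditions on the forms of degree `t`, so
a nonzero form satisfies all of them.
-/

open Module Finset
open MvPolynomial hiding vanishingIdeal

namespace MvPolynomial

section LinearSubst
variable {k σ : Type*} [Field k] [Fintype σ] [DecidableEq σ]

noncomputable def linearSubst (u : (σ → k) →ₗ[k] (σ → k)) :
    MvPolynomial σ k →ₐ[k] MvPolynomial σ k :=
  aeval fun j => ∑ l, C (LinearMap.toMatrix' u j l) * X l

theorem linearSubst_X (u : (σ → k) →ₗ[k] (σ → k)) (j : σ) :
    linearSubst u (X j) = ∑ l, C (LinearMap.toMatrix' u j l) * X l :=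
  aeval_X _ _

theorem aeval_comp_linearSubst (u : (σ → k) →ₗ[k] (σ → k)) (x : σ → k) :
    (aeval x).comp (linearSubst u) = aeval (u x) := by
  ext j
  rw [AlgHom.comp_apply, linearSubst_X, aeval_X, ← LinearMap.toMatrix'_mulVec]
  simp [Matrix.mulVec, dotProduct, mul_comm]

theorem eval_linearSubst (u : (σ → k) →ₗ[k] (σ → k)) (x : σ → k) (f : MvPolynomial σ k) :
    eval x (linearSubst u f) = eval (u x) f := by
  simpa using AlgHom.congr_fun (aeval_comp_linearSubst u x) f

theorem linearSubst_comp (u v : (σ → k) →ₗ[k] (σ → k)) :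
    linearSubst (u ∘ₗ v) = (linearSubst v).comp (linearSubst u) := by
  ext j : 1
  simp only [AlgHom.comp_apply, linearSubst_X, map_sum, map_mul, algHom_C, LinearMap.toMatrix'_comp,
    Matrix.mul_apply, mul_sum, sum_mul, mul_assoc]
  exact sum_comm

theorem linearSubst_id : linearSubst (LinearMap.id : (σ → k) →ₗ[k] (σ → k)) = AlgHom.id k _ := by
  ext j : 1
  simp [linearSubst_X, Pi.single_apply]

theorem linearSubst_symm_linearSubst (u : (σ → k) ≃ₗ[k] (σ → k)) (f : MvPolynomial σ k) :
    linearSubst u.symm.toLinearMap (linearSubst u.toLinearMap f) = f := by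
  rw [← AlgHom.comp_apply, ← linearSubst_comp, LinearEquiv.comp_coe, u.symm_trans_self,
    LinearEquiv.refl_toLinearMap, linearSubst_id, AlgHom.id_apply]

theorem IsHomogeneous.linearSubst {f : MvPolynomial σ k} {t : ℕ} (hf : f.IsHomogeneous t)
    (u : (σ → k) →ₗ[k] (σ → k)) : (MvPolynomial.linearSubst u f).IsHomogeneous t := by
  simpa [MvPolynomial.linearSubst] using hf.aeval _ fun j => IsHomogeneous.sum _ _ 1 fun l _ =>
    isHomogeneous_C_mul_X (LinearMap.toMatrix' u j l) l

end LinearSubst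

theorem isHomogeneous_iff_support_subset {k σ : Type*} [Field k] [Fintype σ] [DecidableEq σ]
    {f : MvPolynomial σ k} {t : ℕ} :
    f.IsHomogeneous t ↔ f.support ⊆ univ.finsuppAntidiag t := by
  simp only [IsHomogeneous, IsWeightedHomogeneous, subset_iff, mem_support_iff, mem_finsuppAntidiag,
    mem_univ, implies_true, and_true, Finsupp.weight_apply, Pi.one_apply, smul_eq_mul, mul_one,
    Finsupp.sum_fintype]

theorem exists_isHomogeneous_ne_zero_forall_eq_zero {k σ ι : Type*} [Field k] [Fintype σ]
    [DecidableEq σ] [Fintype ι] (φ : ι → MvPolynomial σ k →ₗ[k] k) {t : ℕ}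
    (h : Fintype.card ι < (Fintype.card σ + t - 1).choose t) :
    ∃ f : MvPolynomial σ k, f.IsHomogeneous t ∧ f ≠ 0 ∧ ∀ i, φ i f = 0 := by
  let H := restrictSupport k ((univ.finsuppAntidiag t : Finset (σ →₀ ℕ)) : Set (σ →₀ ℕ))
  let b := basisRestrictSupport k ((univ.finsuppAntidiag t : Finset (σ →₀ ℕ)) : Set (σ →₀ ℕ))
  have : FiniteDimensional k H := Module.Finite.of_basis b
  have hH : finrank k H = (Fintype.card σ + t - 1).choose t := by
    rw [finrank_eq_card_basis b]
    simp only [coe_sort_coe, Fintype.card_coe, card_finsuppAntidiag_nat_eq_choose, card_univ]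
  let Φ : H →ₗ[k] ι → k := LinearMap.pi fun i => φ i ∘ₗ H.subtype
  obtain ⟨f, hf, hf0⟩ := Submodule.ne_bot_iff _ |>.mp <|
    Φ.ker_ne_bot_of_finrank_lt (by rwa [finrank_fintype_fun_eq_card, hH])
  refine ⟨f, isHomogeneous_iff_support_subset.mpr (coe_subset.mp f.2), ?_, fun i => ?_⟩
  · exact Submodule.coe_eq_zero.not.mpr hf0
  · exact congrFun (LinearMap.mem_ker.mp hf) i

end MvPolynomial

def lowMonomials {σ : Type*} [Fintype σ] [DecidableEq σ] (S : Finset σ) (t m : ℕ) :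
    Finset (σ →₀ ℕ) :=
  {d ∈ univ.finsuppAntidiag t | ∑ j ∈ S, d j < m}

theorem card_lowMonomials_le {σ : Type*} [Fintype σ] [DecidableEq σ] (S : Finset σ) (t m : ℕ) :
    #(lowMonomials S t m) ≤
      ∑ a ∈ range m, (#Sᶜ + (t - a) - 1).choose (t - a) * (#S + a - 1).choose a := by
  refine (card_eq_sum_card_fiberwise (f := fun d : σ →₀ ℕ => ∑ j ∈ S, d j) (t := range m)
    fun d hd => mem_range.mpr (mem_filter.mp hd).2).trans_le (sum_le_sum fun a _ => ?_)
  rw [← card_finsuppAntidiag_nat_eq_choose, ← card_finsuppAntidiag_nat_eq_choose, ← card_product]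
  refine card_le_card_of_injOn (fun d => (d.filter (· ∉ S), d.filter (· ∈ S))) ?_ ?_
  · intro d hd
    obtain ⟨⟨⟨hsum, -⟩, -⟩, ha⟩ := by
      simpa only [lowMonomials, mem_coe, mem_filter, mem_finsuppAntidiag] using hd
    simp only [coe_product, Set.mem_prod, mem_coe, mem_finsuppAntidiag, Finsupp.support_filter]
    refine ⟨⟨?_, fun j hj => by simpa using (mem_filter.mp hj).2⟩,
      ⟨?_, fun j hj => (mem_filter.mp hj).2⟩⟩
    · rw [sum_congr rfl fun j hj =>
          Finsupp.filter_apply_pos (f := d) (p := (· ∉ S)) (mem_compl.mp hj),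
        ← ha, ← hsum, ← sum_compl_add_sum S, Nat.add_sub_cancel]
    · rw [sum_congr rfl fun j hj => Finsupp.filter_apply_pos (f := d) (p := (· ∈ S)) hj]
      exact ha
  · intro d _ d' _ h
    simp only [Prod.mk.injEq] at h
    rw [← Finsupp.filter_add_filter_not d (· ∈ S), ← Finsupp.filter_add_filter_not d' (· ∈ S), h.1,
      h.2]

theorem cConst_eq_sum_choose {n r : ℕ} (hrn : r < n) (m t : ℕ) :
    cConst n r m t =
      ∑ a ∈ range m, (r + 1 + (t - a) - 1).choose (t - a) * (n - r + a - 1).choose a := by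
  refine sum_congr rfl fun a _ => ?_
  rw [show r + 1 + (t - a) - 1 = t - a + r by omega, Nat.choose_symm_add,
    show n - r + a - 1 = n - r - 1 + a by omega, show a + n - r - 1 = n - r - 1 + a by omega,
    Nat.choose_symm_add]

theorem card_lowMonomials_le_cConst {n r : ℕ} (hrn : r < n) {S : Finset (Fin (n + 1))}
    (hS : #S = n - r) (m t : ℕ) : #(lowMonomials S t m) ≤ cConst n r m t := by
  have hSc : #Sᶜ = r + 1 := by
    rw [card_compl, Fintype.card_fin, hS]
    omega
  simpa only [cConst_eq_sum_choose hrn, hSc, hS] using card_lowMonomials_le S t m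

theorem Submodule.exists_linearEquiv_map_eq {K V : Type*} [DivisionRing K] [AddCommGroup V]
    [Module K V] [FiniteDimensional K V] {E W : Submodule K V}
    (h : finrank K E = finrank K W) : ∃ u : V ≃ₗ[K] V, E.map u.toLinearMap = W := by
  obtain ⟨E', hE'⟩ := E.exists_isCompl
  obtain ⟨W', hW'⟩ := W.exists_isCompl
  have h' : finrank K E' = finrank K W' := by
    have := Submodule.finrank_add_eq_of_isCompl hE'
    have := Submodule.finrank_add_eq_of_isCompl hW'
    omega
  let u : V ≃ₗ[K] V := (Submodule.prodEquivOfIsCompl E E' hE').symm ≪≫ₗ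
    (LinearEquiv.ofFinrankEq E W h).prodCongr (LinearEquiv.ofFinrankEq E' W' h') ≪≫ₗ
    Submodule.prodEquivOfIsCompl W W' hW'
  refine ⟨u, Submodule.eq_of_le_of_finrank_eq ?_ (by rw [LinearEquiv.finrank_map_eq, h])⟩
  rintro _ ⟨x, hx, rfl⟩
  have hsymm := Submodule.prodEquivOfIsCompl_symm_apply_left E E' hE' ⟨x, hx⟩
  simp only [LinearEquiv.coe_coe, u, LinearEquiv.trans_apply, hsymm]
  simp

def coordSubspace (K : Type*) [Field K] {ι : Type*} (S : Finset ι) : Submodule K (ι → K) :=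
  LinearMap.ker (LinearMap.funLeft K K ((↑) : S → ι))

theorem mem_coordSubspace {K ι : Type*} [Field K] {S : Finset ι} {x : ι → K} :
    x ∈ coordSubspace K S ↔ ∀ j ∈ S, x j = 0 := by
  simp [coordSubspace, funext_iff, LinearMap.funLeft]

theorem finrank_coordSubspace {K ι : Type*} [Field K] [Fintype ι] (S : Finset ι) :
    finrank K (coordSubspace K S) = Fintype.card ι - #S := by
  have hrange : LinearMap.range (LinearMap.funLeft K K ((↑) : S → ι)) = ⊤ :=
    LinearMap.range_eq_top.mpr
      (LinearMap.funLeft_surjective_of_injective _ _ _ Subtype.val_injective)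
  have := (LinearMap.funLeft K K ((↑) : S → ι)).finrank_range_add_finrank_ker
  rw [hrange, finrank_top, finrank_fintype_fun_eq_card, finrank_fintype_fun_eq_card,
    Fintype.card_coe] at this
  rw [coordSubspace]
  omega

section VanishingIdeal
variable {k : Type*} [Field k] {n : ℕ}

theorem X_mem_vanishingIdeal_coordSubspace {S : Finset (Fin (n + 1))} {j : Fin (n + 1)}
    (hj : j ∈ S) : X j ∈ vanishingIdeal k n (coordSubspace k S) :=
  fun x hx => by simpa using mem_coordSubspace.mp hx j hj

theorem mem_vanishingIdeal_coordSubspace_pow {S : Finset (Fin (n + 1))} {m : ℕ}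
    {f : MvPolynomial (Fin (n + 1)) k} (h : ∀ d ∈ f.support, m ≤ ∑ j ∈ S, d j) :
    f ∈ vanishingIdeal k n (coordSubspace k S) ^ m := by
  rw [f.as_sum]
  refine Ideal.sum_mem _ fun d hd => ?_
  have hS : ∏ j ∈ S, X j ^ d j ∈ vanishingIdeal k n (coordSubspace k S) ^ m := by
    refine Ideal.pow_le_pow_right (h d hd) ?_
    rw [← prod_pow_eq_pow_sum]
    exact Ideal.prod_mem_prod fun j hj =>
      Ideal.pow_mem_pow (X_mem_vanishingIdeal_coordSubspace hj) _
  rw [monomial_eq, Finsupp.prod_fintype _ _ (fun _ => pow_zero _), ← prod_mul_prod_compl S,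
    mul_comm (∏ j ∈ S, _), ← mul_assoc]
  exact Ideal.mul_mem_left _ _ hS

theorem linearSubst_mem_vanishingIdeal_pow {W W' : Submodule k (Fin (n + 1) → k)}
    {u : (Fin (n + 1) → k) →ₗ[k] (Fin (n + 1) → k)} (hu : ∀ x ∈ W', u x ∈ W) {m : ℕ}
    {f : MvPolynomial (Fin (n + 1)) k} (hf : f ∈ vanishingIdeal k n W ^ m) :
    linearSubst u f ∈ vanishingIdeal k n W' ^ m := by
  have hle : (vanishingIdeal k n W).map (linearSubst u) ≤ vanishingIdeal k n W' :=
    Ideal.map_le_iff_le_comap.mpr fun g hg x hx => by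
      rw [eval_linearSubst]
      exact hg _ (hu x hx)
  have := Ideal.mem_map_of_mem (linearSubst u) hf
  rw [Ideal.map_pow] at this
  exact Ideal.pow_right_mono hle m this

theorem mem_vanishingIdeal_pow_of_coeff_linearSubst_eq_zero {S : Finset (Fin (n + 1))}
    {W : Submodule k (Fin (n + 1) → k)} {u : (Fin (n + 1) → k) ≃ₗ[k] (Fin (n + 1) → k)}
    (hu : (coordSubspace k S).map u.toLinearMap = W)
    {f : MvPolynomial (Fin (n + 1)) k} {t m : ℕ} (hf : f.IsHomogeneous t)
    (h : ∀ d ∈ lowMonomials S t m, coeff d (linearSubst u.toLinearMap f) = 0) :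
    f ∈ vanishingIdeal k n W ^ m := by
  have hsubst : linearSubst u.toLinearMap f ∈ vanishingIdeal k n (coordSubspace k S) ^ m := by
    refine mem_vanishingIdeal_coordSubspace_pow fun d hd => ?_
    by_contra! hlt
    have hdeg := isHomogeneous_iff_support_subset.mp (hf.linearSubst u.toLinearMap) hd
    exact mem_support_iff.mp hd (h d (mem_filter.mpr ⟨hdeg, hlt⟩))
  rw [← linearSubst_symm_linearSubst u f]
  refine linearSubst_mem_vanishingIdeal_pow (fun y hy => ?_) hsubst
  rw [← hu] at hy
  exact (Submodule.mem_map_equiv _).mp hy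

end VanishingIdeal

theorem stmt_2_general (k : Type*) [Field k] (n r s : ℕ)
    (hrn : r < n)
    (W : Fin s → Submodule k (Fin (n + 1) → k))
    (hdim : ∀ i, Module.finrank k (W i) = r + 1)
    (mi : Fin s → ℕ)
    (t : ℕ)
    (hpos : 0 < (Nat.choose (t + n) n : ℤ) - ∑ i, (cConst n r (mi i) t : ℤ)) :
    (∃ f ∈ ⨅ i, (vanishingIdeal k n (W i)) ^ (mi i),
        f ≠ 0 ∧ MvPolynomial.IsHomogeneous f t) ∧
    alphaDeg (⨅ i, (vanishingIdeal k n (W i)) ^ (mi i)) ≤ t := by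
  obtain ⟨S, -, hS⟩ := exists_subset_card_eq (s := (univ : Finset (Fin (n + 1)))) (n := n - r)
    (by rw [card_univ, Fintype.card_fin]; omega)
  have hE : finrank k (coordSubspace k S) = r + 1 := by
    rw [finrank_coordSubspace, Fintype.card_fin, hS]
    omega
  choose u hu using fun i => Submodule.exists_linearEquiv_map_eq (hE.trans (hdim i).symm)
  have hcard : Fintype.card (Σ i, lowMonomials S t (mi i)) <
      (Fintype.card (Fin (n + 1)) + t - 1).choose t := by
    have hlt : ∑ i, cConst n r (mi i) t < (t + n).choose n := by zify; linarith
    calc Fintype.card (Σ i, lowMonomials S t (mi i))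
        = ∑ i, #(lowMonomials S t (mi i)) := by simp [Fintype.card_sigma]
      _ ≤ ∑ i, cConst n r (mi i) t := sum_le_sum fun i _ => card_lowMonomials_le_cConst hrn hS _ _
      _ < (t + n).choose n := hlt
      _ = _ := by rw [Fintype.card_fin, show n + 1 + t - 1 = n + t by omega, add_comm t n,
        Nat.choose_symm_add]
  obtain ⟨f, hf, hf0, hcoeff⟩ := exists_isHomogeneous_ne_zero_forall_eq_zero
    (fun p : Σ i, lowMonomials S t (mi i) =>
      lcoeff k p.2.1 ∘ₗ (linearSubst (u p.1).toLinearMap).toLinearMap) hcard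
  have hmem : f ∈ ⨅ i, vanishingIdeal k n (W i) ^ mi i := Submodule.mem_iInf _ |>.mpr fun i =>
    mem_vanishingIdeal_pow_of_coeff_linearSubst_eq_zero (hu i) hf fun d hd => hcoeff ⟨i, d, hd⟩
  exact ⟨⟨f, hmem, hf0, hf⟩, Nat.sInf_le ⟨f, hmem, hf0, hf⟩⟩

/-- Let `k` be algebraically closed, `n > r ≥ 0`, `s ≥ 1`, and let
`L_1,…,L_s` be pairwise disjoint `r`-dimensional linear subspaces of `P^n` (given by
`(r+1)`-dimensional subspaces `W i ⊆ k^{n+1}` meeting pairwise only in `0`). Let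
`m_1,…,m_s ≥ 1`, `m = max_i m_i`, `t ≥ m`. If `C(t+n, n) − Σ_i c_{n,r,m_i,t} > 0`, then
`I = I(L_1)^{m_1} ∩ … ∩ I(L_s)^{m_s}` contains a nonzero homogeneous polynomial of
degree `t`; in particular `α(I) ≤ t`. -/
theorem stmt_2 (k : Type*) [Field k] [IsAlgClosed k] (n r s : ℕ)
    (hrn : r < n) (hs : 1 ≤ s)
    (W : Fin s → Submodule k (Fin (n + 1) → k))
    (hdim : ∀ i, Module.finrank k (W i) = r + 1)
    (hdisj : ∀ i j, i ≠ j → W i ⊓ W j = ⊥)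
    (mi : Fin s → ℕ) (hmi : ∀ i, 1 ≤ mi i)
    (t : ℕ) (ht : ∀ i, mi i ≤ t)
    (hpos : 0 < (Nat.choose (t + n) n : ℤ) - ∑ i, (cConst n r (mi i) t : ℤ)) :
    (∃ f ∈ ⨅ i, (vanishingIdeal k n (W i)) ^ (mi i),
        f ≠ 0 ∧ MvPolynomial.IsHomogeneous f t) ∧
    alphaDeg (⨅ i, (vanishingIdeal k n (W i)) ^ (mi i)) ≤ t :=
  stmt_2_general k n r s hrn W hdim mi t hpos
end

section
/- Let n, r, s be integers with n ≥ 2r+1, r ≥ 0, s ≥ 1. Then the polynomial Λ_{n,r,s} has exactly one real root g ≥ 1; moreover Λ_{n,r,s}(τ) < 0 for all real τ with 1 ≤ τ < g, and Λ_{n,r,s}(τ) > 0 for all real τ > g. -/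
/-!
With `B(t) = Σ_{j ≤ r} C(n,j) t^j` we have `n! · Λ_{n,r,s}(τ) = τ^n - s · B(τ - 1)`.
On `τ ≥ 1` the polynomial `B(τ - 1)` is positive, hence `Λ_{n,r,s}(τ)` has the sign of
`τ^n / B(τ - 1) - s`. The ratio `τ^n / B(τ - 1)` equals `1` at `τ = 1`, grows at least like
`τ / B(1)`, and is strictly increasing because of the telescoping identity
`n B(t) - (1 + t) B'(t) = (n - r) C(n,r) t^r`. So it crosses the level `s ≥ 1` exactly once.
-/

/-- `Λ_{n,r,s}(τ) = (1/n!)·(τ^n − s·Σ_{j=0}^r C(n,j)·(τ−1)^j)`. -/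
noncomputable def Lam (n r s : ℕ) (τ : ℝ) : ℝ :=
  (1 / (Nat.factorial n : ℝ)) *
    (τ ^ n - (s : ℝ) * ∑ j ∈ Finset.range (r + 1), (Nat.choose n j : ℝ) * (τ - 1) ^ j)

open Finset Set

section TruncBinomial

variable {R : Type*} [CommRing R]

noncomputable def truncBinomial (n r : ℕ) (t : R) : R :=
  ∑ j ∈ range (r + 1), (n.choose j : R) * t ^ j

noncomputable def truncBinomialDeriv (n r : ℕ) (t : R) : R :=
  ∑ j ∈ range (r + 1), (n.choose j : R) * (j * t ^ (j - 1))

@[simp]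
theorem truncBinomial_zero (n r : ℕ) : truncBinomial n r (0 : R) = 1 := by
  simp [truncBinomial, sum_range_succ']

theorem choose_succ_right_mul_cast (n r : ℕ) :
    (n.choose (r + 1) : R) * (r + 1) = n.choose r * ((n : R) - r) := by
  rcases le_or_gt r n with hr | hr
  · rw [← Nat.cast_sub hr]
    simpa using congrArg (Nat.cast : ℕ → R) (Nat.choose_succ_right_eq n r)
  · simp [Nat.choose_eq_zero_of_lt hr, Nat.choose_eq_zero_of_lt (hr.trans (Nat.lt_succ_self r))]

theorem natCast_mul_truncBinomial_sub_mul_truncBinomialDeriv (n r : ℕ) (t : R) :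
    n * truncBinomial n r t - (1 + t) * truncBinomialDeriv n r t
      = ((n : R) - r) * n.choose r * t ^ r := by
  induction r with
  | zero => simp [truncBinomial, truncBinomialDeriv]
  | succ r ih =>
    simp only [truncBinomial, truncBinomialDeriv, sum_range_succ, Nat.add_sub_cancel]
      at ih ⊢
    push_cast at ih ⊢
    linear_combination ih - t ^ r * choose_succ_right_mul_cast (R := R) n r

end TruncBinomial

section Real

variable (n r : ℕ)

theorem truncBinomial_pos {t : ℝ} (ht : 0 ≤ t) : 0 < truncBinomial n r t := by
  rw [truncBinomial, sum_range_succ']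
  exact add_pos_of_nonneg_of_pos (sum_nonneg fun j _ => by positivity) (by simp)

theorem truncBinomial_sub_one_div_factorial_pos {τ : ℝ} (hτ : 1 ≤ τ) :
    0 < truncBinomial n r (τ - 1) / n.factorial :=
  div_pos (truncBinomial_pos n r (sub_nonneg.2 hτ)) (by positivity)

theorem truncBinomial_le_mul_pow {t : ℝ} (ht : 0 ≤ t) :
    truncBinomial n r t ≤ truncBinomial n r 1 * (1 + t) ^ r := by
  rw [truncBinomial, truncBinomial, sum_mul]
  refine sum_le_sum fun j hj => ?_
  have hjr : j ≤ r := Nat.lt_succ_iff.mp (mem_range.mp hj)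
  calc (n.choose j : ℝ) * t ^ j ≤ n.choose j * (1 + t) ^ r := by
        gcongr
        exact (pow_le_pow_left₀ ht (by linarith) j).trans (pow_le_pow_right₀ (by linarith) hjr)
    _ = n.choose j * 1 ^ j * (1 + t) ^ r := by rw [one_pow, mul_one]

theorem hasDerivAt_truncBinomial (t : ℝ) :
    HasDerivAt (truncBinomial n r) (truncBinomialDeriv n r t) t := by
  unfold truncBinomial truncBinomialDeriv
  exact HasDerivAt.fun_sum fun j _ => (hasDerivAt_pow j t).const_mul _

theorem continuous_truncBinomial : Continuous (truncBinomial (R := ℝ) n r) :=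
  continuous_iff_continuousAt.2 fun t => (hasDerivAt_truncBinomial n r t).continuousAt

noncomputable def binomialRatio (τ : ℝ) : ℝ :=
  τ ^ n / truncBinomial n r (τ - 1)

@[simp]
theorem binomialRatio_one : binomialRatio n r 1 = 1 := by
  simp [binomialRatio]

variable {n r}

theorem div_truncBinomial_one_le_binomialRatio (hrn : r < n) {τ : ℝ} (hτ : 1 ≤ τ) :
    τ / truncBinomial n r 1 ≤ binomialRatio n r τ := by
  have hB := truncBinomial_pos n r (sub_nonneg.2 hτ)
  have hB1 := truncBinomial_pos n r zero_le_one
  have hle := truncBinomial_le_mul_pow n r (sub_nonneg.2 hτ)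
  rw [add_sub_cancel] at hle
  rw [binomialRatio, div_le_div_iff₀ hB1 hB]
  calc τ * truncBinomial n r (τ - 1) ≤ τ * (truncBinomial n r 1 * τ ^ r) := by gcongr
    _ = τ ^ (r + 1) * truncBinomial n r 1 := by ring
    _ ≤ τ ^ n * truncBinomial n r 1 := by gcongr; exact hrn

theorem continuousOn_binomialRatio : ContinuousOn (binomialRatio n r) (Ici 1) :=
  (continuous_pow n).continuousOn.div
    ((continuous_truncBinomial n r).comp (continuous_sub_right 1)).continuousOn
    fun _ hτ => (truncBinomial_pos n r (sub_nonneg.2 hτ)).ne'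

theorem strictMonoOn_binomialRatio (hrn : r < n) : StrictMonoOn (binomialRatio n r) (Ici 1) := by
  refine strictMonoOn_of_deriv_pos (convex_Ici 1) continuousOn_binomialRatio fun τ hτ => ?_
  rw [interior_Ici, Set.mem_Ioi] at hτ
  have hB := truncBinomial_pos n r (sub_nonneg.2 hτ.le)
  have hderiv : HasDerivAt (binomialRatio n r) ((n * τ ^ (n - 1) * truncBinomial n r (τ - 1)
      - τ ^ n * truncBinomialDeriv n r (τ - 1)) / truncBinomial n r (τ - 1) ^ 2) τ :=
    (hasDerivAt_pow n τ).div ((hasDerivAt_truncBinomial n r (τ - 1)).comp_sub_const τ 1) hB.ne'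
  have hnum : n * τ ^ (n - 1) * truncBinomial n r (τ - 1) - τ ^ n * truncBinomialDeriv n r (τ - 1)
      = τ ^ (n - 1) * (((n : ℝ) - r) * n.choose r * (τ - 1) ^ r) := by
    have hτn : τ ^ n = τ ^ (n - 1) * (1 + (τ - 1)) := by
      rw [add_sub_cancel, ← pow_succ, Nat.sub_add_cancel (by omega)]
    rw [hτn, ← natCast_mul_truncBinomial_sub_mul_truncBinomialDeriv]
    ring
  rw [hderiv.deriv, hnum]
  have hrn' : (r : ℝ) < n := by exact_mod_cast hrn
  have hchoose : (0 : ℝ) < n.choose r := by exact_mod_cast Nat.choose_pos hrn.le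
  have hτ1 : 0 < τ - 1 := sub_pos.2 hτ
  positivity

variable (s : ℕ) {τ : ℝ}

theorem Lam_eq_mul_binomialRatio_sub (hτ : 1 ≤ τ) :
    Lam n r s τ = truncBinomial n r (τ - 1) / n.factorial * (binomialRatio n r τ - s) := by
  have hB := (truncBinomial_pos n r (sub_nonneg.2 hτ)).ne'
  rw [Lam, one_div_mul_eq_div, binomialRatio, ← truncBinomial]
  field_simp

theorem Lam_neg_iff (hτ : 1 ≤ τ) : Lam n r s τ < 0 ↔ binomialRatio n r τ < s := by
  have hc := truncBinomial_sub_one_div_factorial_pos n r hτ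
  rw [Lam_eq_mul_binomialRatio_sub s hτ, ← sub_neg (a := binomialRatio n r τ)]
  exact ⟨fun h => neg_of_mul_neg_right h hc.le, mul_neg_of_pos_of_neg hc⟩

theorem Lam_eq_zero_iff (hτ : 1 ≤ τ) : Lam n r s τ = 0 ↔ binomialRatio n r τ = s := by
  rw [Lam_eq_mul_binomialRatio_sub s hτ,
    mul_eq_zero_iff_left (truncBinomial_sub_one_div_factorial_pos n r hτ).ne', sub_eq_zero]

theorem Lam_pos_iff (hτ : 1 ≤ τ) : 0 < Lam n r s τ ↔ s < binomialRatio n r τ := by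
  have hc := truncBinomial_sub_one_div_factorial_pos n r hτ
  rw [Lam_eq_mul_binomialRatio_sub s hτ, mul_pos_iff_of_pos_left hc, sub_pos]

theorem exists_binomialRatio_eq (hrn : r < n) (hs : 1 ≤ s) :
    ∃ g, 1 ≤ g ∧ binomialRatio n r g = s := by
  have hB1 : 1 ≤ truncBinomial n r (1 : ℝ) := by
    simpa using truncBinomial_le_mul_pow n r le_rfl
  have hs' : (1 : ℝ) ≤ s := by exact_mod_cast hs
  have hM : 1 ≤ s * truncBinomial n r (1 : ℝ) := one_le_mul_of_one_le_of_one_le hs' hB1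
  have hsM : (s : ℝ) ≤ binomialRatio n r (s * truncBinomial n r 1) := by
    simpa [mul_div_cancel_right₀ _ (zero_lt_one.trans_le hB1).ne'] using
      div_truncBinomial_one_le_binomialRatio hrn hM
  obtain ⟨g, hg, hgs⟩ := intermediate_value_Icc hM
    (continuousOn_binomialRatio.mono Icc_subset_Ici_self) ⟨by simpa using hs', hsM⟩
  exact ⟨g, hg.1, hgs⟩

end Real

/-- For integers `n ≥ 2r+1`, `r ≥ 0`, `s ≥ 1`, the polynomial `Λ_{n,r,s}` has
exactly one real root `g ≥ 1`; moreover `Λ_{n,r,s}(τ) < 0` for `1 ≤ τ < g` and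
`Λ_{n,r,s}(τ) > 0` for `τ > g`. -/
theorem stmt_6 (n r s : ℕ) (hn : 2 * r + 1 ≤ n) (hs : 1 ≤ s) :
    (∃! g : ℝ, 1 ≤ g ∧ Lam n r s g = 0) ∧
    ∀ g : ℝ, 1 ≤ g → Lam n r s g = 0 →
      (∀ τ : ℝ, 1 ≤ τ → τ < g → Lam n r s τ < 0) ∧
      (∀ τ : ℝ, g < τ → 0 < Lam n r s τ) := by
  have hrn : r < n := by omega
  have hmono := strictMonoOn_binomialRatio hrn
  obtain ⟨g, hg1, hg⟩ := exists_binomialRatio_eq s hrn hs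
  refine ⟨⟨g, ⟨hg1, (Lam_eq_zero_iff s hg1).2 hg⟩, fun y ⟨hy1, hy⟩ => ?_⟩, fun g hg1 hg => ?_⟩
  · exact hmono.injOn hy1 hg1 (((Lam_eq_zero_iff s hy1).1 hy).trans hg.symm)
  rw [Lam_eq_zero_iff s hg1] at hg
  refine ⟨fun τ hτ1 hτg => ?_, fun τ hgτ => ?_⟩
  · exact (Lam_neg_iff s hτ1).2 (hg ▸ hmono hτ1 hg1 hτg)
  · have hτ1 : 1 ≤ τ := hg1.trans hgτ.le
    exact (Lam_pos_iff s hτ1).2 (hg ▸ hmono hg1 hτ1 hgτ)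
end

section
/- Let n, r, s be integers with n ≥ 2r+1, r ≥ 0, s ≥ 1, and let g_{n,r,s} denote the unique real root ≥ 1 of Λ_{n,r,s}. Then: (i) g_{n,r,1} = 1; (ii) if s > 1 then g_{n,r,s} > 1; and (iii) if r > 0 and s > 1 then g_{n,r,s} > g_{n−1,r−1,s}. -/
open Set Finset

def SignChangeAt (f : ℝ → ℝ) (ρ : ℝ) : Prop :=
  (∀ y, 1 ≤ y → y < ρ → f y < 0) ∧ ∀ y, ρ < y → 0 < f y

section Antiderivative

variable {F f : ℝ → ℝ} (hF : ∀ x, HasDerivAt F (f x) x)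
include hF

theorem exists_root_of_hasDerivAt (hf : Continuous f) (hF1 : F 1 < 0) (hf1 : f 1 < 0)
    {ρ : ℝ} (hρ1 : 1 ≤ ρ) (hρ : F ρ = 0) : ∃ c ∈ Ioo 1 ρ, f c = 0 := by
  have h1ρ : 1 < ρ := hρ1.lt_of_ne (by rintro rfl; linarith)
  obtain ⟨d, ⟨hd1, hdρ⟩, hd⟩ := exists_hasDerivAt_eq_slope F f h1ρ
    (fun x _ => (hF x).continuousAt.continuousWithinAt) fun x _ => hF x
  have hfd : 0 < f d := by
    rw [hd, hρ]
    exact div_pos (by linarith) (by linarith)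
  obtain ⟨c, ⟨hc1, hcd⟩, hc⟩ := intermediate_value_Ioo hd1.le hf.continuousOn ⟨hf1, hfd⟩
  exact ⟨c, ⟨hc1, hcd.trans hdρ⟩, hc⟩

theorem SignChangeAt.of_hasDerivAt (hF1 : F 1 < 0) {c : ℝ} (hc1 : 1 ≤ c) (hf : SignChangeAt f c)
    {ρ : ℝ} (hρ1 : 1 ≤ ρ) (hρ : F ρ = 0) : c < ρ ∧ SignChangeAt F ρ := by
  have hcont : Continuous F := continuous_iff_continuousAt.2 fun x => (hF x).continuousAt
  have hanti : StrictAntiOn F (Icc 1 c) :=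
    strictAntiOn_of_deriv_neg (convex_Icc 1 c) hcont.continuousOn fun x hx => by
      rw [interior_Icc] at hx
      rw [(hF x).deriv]
      exact hf.1 x hx.1.le hx.2
  have hmono : StrictMonoOn F (Ici c) :=
    strictMonoOn_of_deriv_pos (convex_Ici c) hcont.continuousOn fun x hx => by
      rw [interior_Ici] at hx
      rw [(hF x).deriv]
      exact hf.2 x hx
  have hneg : ∀ y, 1 ≤ y → y ≤ c → F y < 0 := fun y hy1 hyc =>
    (hanti.antitoneOn ⟨le_rfl, hc1⟩ ⟨hy1, hyc⟩ hy1).trans_lt hF1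
  have hcρ : c < ρ := lt_of_not_ge fun hρc => (hneg ρ hρ1 hρc).ne hρ
  refine ⟨hcρ, fun y hy1 hyρ => ?_, fun y hρy => ?_⟩
  · rcases le_or_gt y c with hyc | hcy
    · exact hneg y hy1 hyc
    · exact hρ ▸ hmono hcy.le hcρ.le hyρ
  · exact hρ ▸ hmono hcρ.le (hcρ.trans hρy).le hρy

end Antiderivative

section Lam

variable {n r s : ℕ}

theorem Lam_at_one (n r s : ℕ) : Lam n r s 1 = (1 - s) / n.factorial := by
  rw [Lam, Finset.sum_eq_single 0 (fun j _ hj => by simp [zero_pow hj]) (by simp)]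
  simp only [one_div, one_pow, Nat.choose_zero_right, Nat.cast_one, sub_self, pow_zero, mul_one]
  ring

theorem Lam_at_one_neg (hs : 1 < s) : Lam n r s 1 < 0 := by
  rw [Lam_at_one]
  exact div_neg_of_neg_of_pos (by linarith [show (1 : ℝ) < s by exact_mod_cast hs])
    (by positivity)

theorem continuous_Lam (n r s : ℕ) : Continuous (Lam n r s) := by
  unfold Lam
  fun_prop

theorem hasDerivAt_Lam (n r s : ℕ) (x : ℝ) :
    HasDerivAt (Lam (n + 1) (r + 1) s) (Lam n r s x) x := by
  have hsum : HasDerivAt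
      (fun y : ℝ => ∑ j ∈ range (r + 2), ((n + 1).choose j : ℝ) * (y - 1) ^ j)
      (∑ j ∈ range (r + 2), ((n + 1).choose j : ℝ) * (j * (x - 1) ^ (j - 1) * 1)) x :=
    HasDerivAt.fun_sum fun j _ => (((hasDerivAt_id x).sub_const 1).pow j).const_mul _
  refine (((hasDerivAt_pow (n + 1) x).sub (hsum.const_mul (s : ℝ))).const_mul
    (1 / ((n + 1).factorial : ℝ))).congr_deriv ?_
  have hchoose : ∀ i, ((n + 1).choose (i + 1) : ℝ) * ((i + 1 : ℕ) * (x - 1) ^ (i + 1 - 1) * 1)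
      = (n + 1) * ((n.choose i : ℝ) * (x - 1) ^ i) := fun i => by
    have key : ((n + 1).choose (i + 1) : ℝ) * (i + 1) = (n + 1) * n.choose i := by
      exact_mod_cast (Nat.add_one_mul_choose_eq n i).symm
    push_cast
    linear_combination (x - 1) ^ i * key
  rw [Finset.sum_range_succ', Finset.sum_congr rfl fun i _ => hchoose i, ← Finset.mul_sum,
    Lam, Nat.factorial_succ, Nat.add_sub_cancel]
  have := n.factorial_pos
  simp only [Nat.cast_zero, zero_mul, mul_zero, add_zero]
  push_cast
  field_simp

theorem Lam_signChangeAt (hs : 1 < s) (hrn : r < n) {ρ : ℝ} (hρ1 : 1 ≤ ρ)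
    (hρ : Lam n r s ρ = 0) : SignChangeAt (Lam n r s) ρ := by
  induction r generalizing n ρ with
  | zero =>
    have hLam : ∀ y, Lam n 0 s y = (y ^ n - s) / n.factorial := fun y => by
      simp only [Lam, one_div, zero_add, range_one, sum_singleton, Nat.choose_zero_right,
        Nat.cast_one, pow_zero, mul_one]
      ring
    have hρn : ρ ^ n = s := by
      rw [hLam, div_eq_zero_iff] at hρ
      exact sub_eq_zero.1 (hρ.resolve_right (by positivity))
    have hn0 : n ≠ 0 := by omega
    refine ⟨fun y hy1 hyρ => ?_, fun y hρy => ?_⟩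
    · rw [hLam, ← hρn]
      exact div_neg_of_neg_of_pos
        (sub_neg.2 (pow_lt_pow_left₀ hyρ (by linarith) hn0)) (by positivity)
    · rw [hLam, ← hρn]
      exact div_pos (sub_pos.2 (pow_lt_pow_left₀ hρy (by linarith) hn0)) (by positivity)
  | succ r ih =>
    obtain ⟨m, rfl⟩ : ∃ m, n = m + 1 := ⟨n - 1, by omega⟩
    obtain ⟨c, ⟨hc1, -⟩, hc⟩ := exists_root_of_hasDerivAt (hasDerivAt_Lam m r s)
      (continuous_Lam m r s) (Lam_at_one_neg hs) (Lam_at_one_neg hs) hρ1 hρ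
    exact ((ih (by omega) hc1.le hc).of_hasDerivAt (hasDerivAt_Lam m r s)
      (Lam_at_one_neg hs) hc1.le hρ1 hρ).2

theorem Lam_s_one_eq_sum_Ico (hrn : r ≤ n) (τ : ℝ) :
    Lam n r 1 τ = (∑ j ∈ Ico (r + 1) (n + 1), (n.choose j : ℝ) * (τ - 1) ^ j) / n.factorial := by
  have hbinom : τ ^ n = ∑ j ∈ range (n + 1), (n.choose j : ℝ) * (τ - 1) ^ j := by
    have h := add_pow (τ - 1) 1 n
    rw [sub_add_cancel] at h
    rw [h]
    exact Finset.sum_congr rfl fun j _ => by ring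
  rw [Lam, hbinom, ← Finset.sum_range_add_sum_Ico _ (by omega : r + 1 ≤ n + 1)]
  push_cast
  ring

theorem Lam_s_one_pos (hrn : r < n) {τ : ℝ} (hτ : 1 < τ) : 0 < Lam n r 1 τ := by
  rw [Lam_s_one_eq_sum_Ico hrn.le]
  refine div_pos (Finset.sum_pos (fun j hj => ?_) ⟨n, mem_Ico.2 ⟨hrn, n.lt_succ_self⟩⟩)
    (by positivity)
  exact mul_pos (Nat.cast_pos.2 (Nat.choose_pos (Nat.lt_succ_iff.1 (mem_Ico.1 hj).2)))
    (pow_pos (sub_pos.2 hτ) j)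

end Lam

theorem stmt_7_general (n r s : ℕ) (hn : 2 * r + 1 ≤ n)
    (g : ℝ) (hg1 : 1 ≤ g) (hg : Lam n r s g = 0) :
    (s = 1 → g = 1) ∧
    (1 < s → 1 < g) ∧
    (0 < r → 1 < s → ∀ g' : ℝ, 1 ≤ g' → Lam (n - 1) (r - 1) s g' = 0 → g' < g) := by
  refine ⟨?_, fun hs => ?_, fun hr hs g' hg'1 hg' => ?_⟩
  · rintro rfl
    exact le_antisymm (not_lt.1 fun h => (Lam_s_one_pos (by omega) h).ne' hg) hg1
  · exact hg1.lt_of_ne fun h => (Lam_at_one_neg hs).ne (h ▸ hg)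
  · obtain ⟨r, rfl⟩ : ∃ r', r = r' + 1 := ⟨r - 1, by omega⟩
    obtain ⟨m, rfl⟩ : ∃ m, n = m + 1 := ⟨n - 1, by omega⟩
    exact ((Lam_signChangeAt hs (by omega) hg'1 hg').of_hasDerivAt
      (hasDerivAt_Lam m r s) (Lam_at_one_neg hs) hg'1 hg1 hg).1

/-- With `g = g_{n,r,s}` the unique real root `≥ 1` of `Λ_{n,r,s}`:
(i) `g_{n,r,1} = 1`; (ii) if `s > 1` then `g_{n,r,s} > 1`; (iii) if `r > 0` and `s > 1`
then `g_{n,r,s} > g_{n−1,r−1,s}` (any root `≥ 1` of `Λ_{n−1,r−1,s}` is `< g`). -/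
theorem stmt_7 (n r s : ℕ) (hn : 2 * r + 1 ≤ n) (hs : 1 ≤ s)
    (g : ℝ) (hg1 : 1 ≤ g) (hg : Lam n r s g = 0) :
    (s = 1 → g = 1) ∧
    (1 < s → 1 < g) ∧
    (0 < r → 1 < s → ∀ g' : ℝ, 1 ≤ g' → Lam (n - 1) (r - 1) s g' = 0 → g' < g) :=
  stmt_7_general n r s hn g hg1 hg
end

section
/- For every integer n ≥ 1 there exists an integer S such that for every integer s ≥ S, inf{ t/m : t, m integers with t ≥ m ≥ 1 and C(t+n, n) − s·C(m+n−1, n) > 0 } = s^{1/n} (the real n-th root of s). In other words, e_{n,0,s} = g_{n,0,s} for all sufficiently large s. -/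
open Finset

private lemma prod_fac (n t : ℕ) :
    (∏ i ∈ Finset.range n, (t + 1 + i)) * t.factorial = (t + n).factorial := by
  induction n with
  | zero => simp
  | succ k ih =>
    rw [Finset.prod_range_succ, mul_right_comm, ih, show t + (k+1) = (t+k) + 1 by ring,
      Nat.factorial_succ (t + k)]
    ring

private lemma choose_prod (n t : ℕ) :
    Nat.choose (t + n) n * n.factorial = ∏ i ∈ Finset.range n, (t + 1 + i) := by
  have h := Nat.choose_mul_factorial_mul_factorial (show n ≤ t + n by omega)
  have ht : t + n - n = t := by omega
  rw [ht] at h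
  exact Nat.eq_of_mul_eq_mul_right (Nat.factorial_pos t) (h.trans (prod_fac n t).symm)

private lemma cond_iff (n s t m : ℕ) (hm : 1 ≤ m) :
    (0 < (Nat.choose (t + n) n : ℤ) - (s : ℤ) * (Nat.choose (m + n - 1) n : ℤ))
      ↔ s * ∏ i ∈ Finset.range n, (m + i) < ∏ i ∈ Finset.range n, (t + 1 + i) := by
  obtain ⟨m', rfl⟩ : ∃ m', m = m' + 1 := ⟨m - 1, by omega⟩
  have h1 : m' + 1 + n - 1 = m' + n := by omega
  rw [h1, sub_pos]
  have key : ∀ a b : ℕ, a * n.factorial < b * n.factorial ↔ a < b :=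
    fun a b => Nat.mul_lt_mul_right (Nat.factorial_pos n)
  constructor
  · intro h
    have h' : s * Nat.choose (m' + n) n < Nat.choose (t + n) n := by exact_mod_cast h
    have h2 : s * Nat.choose (m' + n) n * n.factorial < Nat.choose (t + n) n * n.factorial :=
      (key _ _).mpr h'
    rwa [mul_assoc, choose_prod, choose_prod] at h2
  · intro h
    have h2 : s * Nat.choose (m' + n) n * n.factorial < Nat.choose (t + n) n * n.factorial := by
      rwa [mul_assoc, choose_prod, choose_prod]
    have h3 := (key _ _).mp h2
    exact_mod_cast h3

private lemma lower_key (n s t m : ℕ) (hn : 1 ≤ n) (hm : 1 ≤ m) (hmt : m ≤ t)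
    (hs : (3 * n) ^ n ≤ s)
    (h : s * ∏ i ∈ Finset.range n, (m + i) < ∏ i ∈ Finset.range n, (t + 1 + i)) :
    s * m ^ n ≤ t ^ n := by
  rcases Nat.lt_or_ge n 2 with h2 | h2
  · have hn1 : n = 1 := by omega
    subst hn1
    simp only [Finset.prod_range_one, pow_one, add_zero] at h ⊢
    exact Nat.lt_succ_iff.mp h
  · obtain ⟨k, rfl⟩ : ∃ k, n = k + 2 := ⟨n - 2, by omega⟩
    set n := k + 2 with hndef
    have hQ : m ^ n ≤ ∏ i ∈ Finset.range n, (m + i) := by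
      have := Finset.pow_card_le_prod (Finset.range n) (fun i => m + i) m
        (fun i _ => Nat.le_add_right m i)
      simpa using this
    by_cases hbig : 2 * n * m ≤ t
    · -- pairing argument
      have h2m : 2 * m ≤ t := by
        calc 2 * m = 2 * 1 * m := by ring
        _ ≤ 2 * n * m := by
            apply Nat.mul_le_mul_right
            apply Nat.mul_le_mul_left
            omega
        _ ≤ t := hbig
      have hpair : m ^ n * ∏ i ∈ Finset.range n, (t + 1 + i)
          ≤ t ^ n * ∏ i ∈ Finset.range n, (m + i) := by
        have lhs_eq : m ^ n * ∏ i ∈ Finset.range n, (t + 1 + i)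
            = ∏ i ∈ Finset.range n, (m * (t + 1 + i)) := by
          rw [Finset.prod_mul_distrib, Finset.prod_const, Finset.card_range]
        have rhs_eq : t ^ n * ∏ i ∈ Finset.range n, (m + i)
            = ∏ i ∈ Finset.range n, (t * (m + i)) := by
          rw [Finset.prod_mul_distrib, Finset.prod_const, Finset.card_range]
        rw [lhs_eq, rhs_eq, hndef]
        rw [Finset.prod_range_succ (fun i => m * (t + 1 + i)) (k + 1),
          Finset.prod_range_succ' (fun i => m * (t + 1 + i)) k,
          Finset.prod_range_succ (fun i => t * (m + i)) (k + 1),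
          Finset.prod_range_succ' (fun i => t * (m + i)) k]
        have hmid : ∏ i ∈ Finset.range k, (m * (t + 1 + (i + 1)))
            ≤ ∏ i ∈ Finset.range k, (t * (m + (i + 1))) := by
          apply Finset.prod_le_prod'
          intro i _
          have h1 : m * (i + 2) ≤ 2 * m * (i + 1) := by nlinarith
          have h2 : 2 * m * (i + 1) ≤ t * (i + 1) := Nat.mul_le_mul_right _ h2m
          nlinarith
        have hbound : (m * (t + 1 + 0)) * (m * (t + 1 + (k + 1)))
            ≤ (t * (m + 0)) * (t * (m + (k + 1))) := by
          have h1 : 2 * (k + 2) * m ≤ t := hbig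
          zify at h1 hm ⊢
          nlinarith [h1, mul_le_mul_of_nonneg_right h1 (by positivity : (0:ℤ) ≤ (t:ℤ)),
            mul_le_mul_of_nonneg_right h1 (by positivity : (0:ℤ) ≤ (m:ℤ)),
            mul_nonneg (mul_nonneg (by positivity : (0:ℤ) ≤ (m:ℤ)) (by positivity : (0:ℤ) ≤ (t:ℤ))) (by positivity : (0:ℤ) ≤ (k:ℤ)),
            mul_nonneg (by positivity : (0:ℤ) ≤ (m:ℤ) * (t:ℤ)) (by positivity : (0:ℤ) ≤ (k:ℤ) * (k:ℤ)),
            mul_le_mul_of_nonneg_left h1 (by positivity : (0:ℤ) ≤ (k:ℤ)),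
            mul_nonneg (mul_nonneg (by positivity : (0:ℤ) ≤ (k:ℤ)) (by positivity : (0:ℤ) ≤ (m:ℤ))) (by positivity : (0:ℤ) ≤ (t:ℤ))]
        calc (∏ i ∈ Finset.range k, (m * (t + 1 + (i + 1)))) * (m * (t + 1 + 0)) * (m * (t + 1 + (k + 1)))
            = (∏ i ∈ Finset.range k, (m * (t + 1 + (i + 1)))) * ((m * (t + 1 + 0)) * (m * (t + 1 + (k + 1)))) := by ring
          _ ≤ (∏ i ∈ Finset.range k, (t * (m + (i + 1)))) * ((t * (m + 0)) * (t * (m + (k + 1)))) :=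
              Nat.mul_le_mul hmid hbound
          _ = (∏ i ∈ Finset.range k, (t * (m + (i + 1)))) * (t * (m + 0)) * (t * (m + (k + 1))) := by ring
      -- combine
      have hQ1 : 1 ≤ ∏ i ∈ Finset.range n, (m + i) :=
        le_trans (Nat.one_le_pow _ _ (by omega)) hQ
      have hstep : s * m ^ n * ∏ i ∈ Finset.range n, (m + i)
          ≤ t ^ n * ∏ i ∈ Finset.range n, (m + i) := by
        calc s * m ^ n * ∏ i ∈ Finset.range n, (m + i)
            = m ^ n * (s * ∏ i ∈ Finset.range n, (m + i)) := by ring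
          _ ≤ m ^ n * ∏ i ∈ Finset.range n, (t + 1 + i) := Nat.mul_le_mul_left _ h.le
          _ ≤ t ^ n * ∏ i ∈ Finset.range n, (m + i) := hpair
      exact Nat.le_of_mul_le_mul_right (by simpa using hstep) (by omega)
    · -- small case: contradiction
      exfalso
      push_neg at hbig
      have hP : ∏ i ∈ Finset.range n, (t + 1 + i) ≤ (t + n) ^ n := by
        have := Finset.prod_le_pow_card (Finset.range n) (fun i => t + 1 + i) (t + n)
          (fun i hi => by
            have : i < n := Finset.mem_range.mp hi
            show t + 1 + i ≤ t + n
            omega)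
        simpa using this
      have hnm : n ≤ n * m := Nat.le_mul_of_pos_right n (by omega)
      have h3 : t + n ≤ 3 * n * m := by linarith
      have h4 : (t + n) ^ n ≤ (3 * n) ^ n * m ^ n := by
        rw [← mul_pow]
        exact Nat.pow_le_pow_left h3 n
      have h5 : (3 * n) ^ n * m ^ n ≤ s * m ^ n := Nat.mul_le_mul_right _ hs
      have h6 : s * m ^ n ≤ s * ∏ i ∈ Finset.range n, (m + i) := Nat.mul_le_mul_left _ hQ
      exact absurd (lt_of_lt_of_le h (hP.trans (h4.trans (h5.trans h6)))) (lt_irrefl _)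

/-- For every integer `n ≥ 1` there exists `S` such that for all `s ≥ S`,
`inf{ t/m : t ≥ m ≥ 1, C(t+n, n) − s·C(m+n−1, n) > 0 } = s^{1/n}`;
i.e. `e_{n,0,s} = g_{n,0,s}` for all sufficiently large `s`. -/
theorem stmt_10 (n : ℕ) (hn : 1 ≤ n) :
    ∃ S : ℕ, ∀ s : ℕ, S ≤ s →
      sInf {x : ℝ | ∃ t m : ℕ, 1 ≤ m ∧ m ≤ t ∧
          0 < (Nat.choose (t + n) n : ℤ) - (s : ℤ) * (Nat.choose (m + n - 1) n : ℤ) ∧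
          x = (t : ℝ) / (m : ℝ)}
        = (s : ℝ) ^ ((1 : ℝ) / (n : ℝ)) := by
  refine ⟨(3 * n) ^ n, fun s hs => ?_⟩
  have hn0 : (n : ℝ) ≠ 0 := Nat.cast_ne_zero.mpr (by omega)
  have hs1 : 1 ≤ s := le_trans (Nat.one_le_pow _ _ (by omega)) hs
  set A := {x : ℝ | ∃ t m : ℕ, 1 ≤ m ∧ m ≤ t ∧
      0 < (Nat.choose (t + n) n : ℤ) - (s : ℤ) * (Nat.choose (m + n - 1) n : ℤ) ∧
      x = (t : ℝ) / (m : ℝ)} with hA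
  set g : ℝ := (s : ℝ) ^ ((1 : ℝ) / (n : ℝ)) with hgdef
  have hgpos : 0 < g := Real.rpow_pos_of_pos (by exact_mod_cast hs1) _
  have hg1 : 1 ≤ g := by
    calc (1:ℝ) = (1:ℝ) ^ ((1:ℝ)/(n:ℝ)) := (Real.one_rpow _).symm
      _ ≤ g := Real.rpow_le_rpow (by norm_num) (by exact_mod_cast hs1) (by positivity)
  have hgpow : g ^ n = (s : ℝ) := by
    calc g ^ n = ((s:ℝ) ^ ((1:ℝ)/(n:ℝ))) ^ ((n:ℕ):ℝ) := by rw [Real.rpow_natCast]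
      _ = (s:ℝ) ^ (((1:ℝ)/(n:ℝ)) * n) := by rw [← Real.rpow_mul (Nat.cast_nonneg s)]
      _ = (s:ℝ) ^ (1:ℝ) := by rw [one_div, inv_mul_cancel₀ hn0]
      _ = s := Real.rpow_one _
  -- admissible construction: for every m ≥ 1
  have adm : ∀ m : ℕ, 1 ≤ m → ∃ t : ℕ, m ≤ t ∧ (t:ℝ) ≤ g * ((m:ℝ) + n - 1) + 1 ∧
      ((t:ℝ)/(m:ℝ)) ∈ A := by
    intro m hm
    set t : ℕ := ⌈g * ((m:ℝ) + n - 1)⌉₊ with htdef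
    have hmn1 : (1:ℝ) ≤ (m:ℝ) + n - 1 := by
      have : (1:ℝ) ≤ (m:ℝ) := by exact_mod_cast hm
      have : (1:ℝ) ≤ (n:ℝ) := by exact_mod_cast hn
      linarith [show (1:ℝ) ≤ (m:ℝ) by exact_mod_cast hm]
    have hmle : (m:ℝ) ≤ g * ((m:ℝ) + n - 1) := by
      have h1 : (m:ℝ) ≤ (m:ℝ) + n - 1 := by
        have : (1:ℝ) ≤ (n:ℝ) := by exact_mod_cast hn
        linarith
      calc (m:ℝ) = 1 * (m:ℝ) := (one_mul _).symm
        _ ≤ g * ((m:ℝ) + n - 1) := by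
            apply mul_le_mul hg1 h1 (by positivity) (le_of_lt hgpos)
    have htge : g * ((m:ℝ) + n - 1) ≤ (t:ℝ) := Nat.le_ceil _
    have hmt : m ≤ t := by exact_mod_cast hmle.trans htge
    have htle : (t:ℝ) ≤ g * ((m:ℝ) + n - 1) + 1 :=
      (Nat.ceil_lt_add_one (by positivity)).le
    refine ⟨t, hmt, htle, ?_⟩
    have key : (s:ℝ) * ∏ i ∈ Finset.range n, ((m:ℝ) + i) <
        ∏ i ∈ Finset.range n, ((t:ℝ) + 1 + i) := by
      have h2 : ∏ i ∈ Finset.range n, (g * ((m:ℝ) + i))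
          = (s:ℝ) * ∏ i ∈ Finset.range n, ((m:ℝ) + i) := by
        rw [Finset.prod_mul_distrib, Finset.prod_const, Finset.card_range, hgpow]
      rw [← h2]
      apply Finset.prod_lt_prod_of_nonempty
      · intro i _
        have : (0:ℝ) < (m:ℝ) + i := by
          have : (1:ℝ) ≤ (m:ℝ) := by exact_mod_cast hm
          positivity
        positivity
      · intro i hi
        have hi' : (i:ℝ) ≤ (n:ℝ) - 1 := by
          have : i + 1 ≤ n := Finset.mem_range.mp hi
          have : ((i:ℕ):ℝ) + 1 ≤ (n:ℝ) := by exact_mod_cast this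
          linarith
        have : g * ((m:ℝ) + i) ≤ g * ((m:ℝ) + n - 1) := by
          apply mul_le_mul_of_nonneg_left (by linarith) (le_of_lt hgpos)
        calc g * ((m:ℝ) + i) ≤ (t:ℝ) := this.trans htge
          _ < (t:ℝ) + 1 + i := by
              have : (0:ℝ) ≤ (i:ℝ) := Nat.cast_nonneg i
              linarith
      · exact Finset.nonempty_range_iff.mpr (by omega)
    have keyN : s * ∏ i ∈ Finset.range n, (m + i) < ∏ i ∈ Finset.range n, (t + 1 + i) := by
      exact_mod_cast key
    exact ⟨t, m, hm, hmt, (cond_iff n s t m hm).mpr keyN, rfl⟩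
  obtain ⟨t₀, ht₀m, _, ht₀⟩ := adm 1 le_rfl
  have hne : A.Nonempty := ⟨_, ht₀⟩
  have hlow : ∀ x ∈ A, g ≤ x := by
    rintro x ⟨t, m, hm, hmt, hcond, rfl⟩
    have hkey := lower_key n s t m hn hm hmt hs ((cond_iff n s t m hm).mp hcond)
    have hm0 : (0:ℝ) < (m:ℝ) := by exact_mod_cast hm
    have hx : (s:ℝ) ≤ ((t:ℝ)/(m:ℝ)) ^ n := by
      rw [div_pow, le_div_iff₀ (by positivity)]
      exact_mod_cast hkey
    have hdiv0 : (0:ℝ) ≤ (t:ℝ)/(m:ℝ) := by positivity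
    have h2 := Real.rpow_le_rpow (Nat.cast_nonneg s) hx (by positivity : (0:ℝ) ≤ 1/(n:ℝ))
    rwa [← Real.rpow_natCast ((t:ℝ)/(m:ℝ)) n, ← Real.rpow_mul hdiv0, mul_one_div,
      div_self hn0, Real.rpow_one] at h2
  have hbdd : BddBelow A := ⟨g, hlow⟩
  apply le_antisymm
  · refine le_of_forall_pos_le_add (fun ε hε => ?_)
    set M : ℕ := max 1 ⌈(g * n + 1)/ε⌉₊ with hMdef
    have hM1 : 1 ≤ M := le_max_left _ _
    have hM0 : (0:ℝ) < (M:ℝ) := by exact_mod_cast hM1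
    obtain ⟨t, hmt, htle, hmem⟩ := adm M hM1
    have hMε : (g * n + 1)/(M:ℝ) ≤ ε := by
      have h1 : ((g * n + 1)/ε : ℝ) ≤ (M:ℝ) := by
        calc ((g * n + 1)/ε : ℝ) ≤ (⌈(g * n + 1)/ε⌉₊ : ℝ) := Nat.le_ceil _
          _ ≤ (M:ℝ) := by exact_mod_cast le_max_right _ _
      rw [div_le_iff₀ hM0]
      rw [div_le_iff₀ hε] at h1
      linarith
    have hrat : (t:ℝ)/(M:ℝ) ≤ g + ε := by
      have h1 : (t:ℝ) ≤ g * M + (g * n + 1) := by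
        have : g * ((M:ℝ) + n - 1) ≤ g * ((M:ℝ) + n) := by
          apply mul_le_mul_of_nonneg_left (by linarith) (le_of_lt hgpos)
        calc (t:ℝ) ≤ g * ((M:ℝ) + n - 1) + 1 := htle
          _ ≤ g * ((M:ℝ) + n) + 1 := by linarith
          _ = g * M + (g * n + 1) := by ring
      calc (t:ℝ)/(M:ℝ) ≤ (g * M + (g * n + 1))/(M:ℝ) := by gcongr
          _ = g + (g * n + 1)/(M:ℝ) := by field_simp
          _ ≤ g + ε := by linarith
    calc sInf A ≤ (t:ℝ)/(M:ℝ) := csInf_le hbdd hmem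
      _ ≤ g + ε := hrat
  · exact le_csInf hne hlow
end

section
/- For every integer n ≥ 3 there exists an integer S such that for every integer s ≥ S, inf{ t/m : t, m integers with t ≥ m ≥ 1 and C(t+n, n) − s·((t+1)·C(m+n−2, n−1) − (n−1)·C(m+n−2, n)) > 0 } = g_{n,1,s}, where g_{n,1,s} is the unique real root ≥ 1 of the polynomial x^n − n·s·x + (n−1)·s. In other words, e_{n,1,s} = g_{n,1,s} for all sufficiently large s. -/
/-!
Multiplied by `n!`, the inequality `P_{n,1,s,m}(t) > 0` reads
`(t+1)(t+2)⋯(t+n) > s · m(m+1)⋯(m+n-2) · (n t - (n-1) m + 2n - 1)`,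
whose part of top degree is `m^n · Λ(t/m)` with `Λ(x) = x^n - n s x + (n-1) s`. Since `Λ` is
convex and `Λ(1) = 1 - s < 0`, it is `≤ 0` on `[1, g]` and `> 0` on `(g, ∞)`.

If `p/q > g`, then along `(t, m) = (k p, k q)` the top-degree part wins as `k → ∞`, so ratios
arbitrarily close to `g` from above occur. If `t/m < g`, the lower-order terms must be controlled:
the rising factorial exceeds `t^n` by `O(t^(n-1))`, and since `Λ(t/m) ≤ 0` forces
`(t/m)^(n-1) ≤ n s`, for large `s` this excess is absorbed by the term `s · m^(n-2) · t` that the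
second factor `m + 1` of `m(m+1)⋯(m+n-2)` contributes; this factor exists because `n ≥ 3`.
-/

open Finset Filter Topology Nat

/-- `n! · Λ_{n,1,s}`. -/
def lambdaPoly (n : ℕ) (s x : ℝ) : ℝ := x ^ n - n * s * x + (n - 1) * s

lemma convexOn_lambdaPoly (n : ℕ) (s : ℝ) : ConvexOn ℝ (Set.Ici 0) (lambdaPoly n s) := by
  have : ConvexOn ℝ (Set.Ici 0) fun x : ℝ => -(n * s) * x + (n - 1) * s :=
    (LinearMap.mul ℝ ℝ (-(n * s))).convexOn (convex_Ici 0) |>.add_const _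
  have hsplit : lambdaPoly n s = (fun x => x ^ n) + fun x => -(n * s) * x + (n - 1) * s := by
    ext x; simp only [lambdaPoly, Pi.add_apply]; ring
  exact hsplit ▸ (convexOn_pow n).add this

section lambdaPoly

variable {n : ℕ} {s g x : ℝ}

lemma lambdaPoly_one : lambdaPoly n s 1 = 1 - s := by
  simp only [lambdaPoly]; ring

lemma lambdaPoly_nonpos_of_le_root (hs : 1 ≤ s) (hg : lambdaPoly n s g = 0) (hx : 1 ≤ x)
    (hxg : x ≤ g) : lambdaPoly n s x ≤ 0 := by
  have hmem : x ∈ segment ℝ 1 g := by rw [segment_eq_Icc (hx.trans hxg)]; exact ⟨hx, hxg⟩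
  have := (convexOn_lambdaPoly n s).le_on_segment (by simp) (by simp; linarith) hmem
  rw [lambdaPoly_one, hg] at this
  exact this.trans (max_le (by linarith) le_rfl)

lemma lambdaPoly_pos_of_root_lt (hs : 1 < s) (hg1 : 1 ≤ g) (hg : lambdaPoly n s g = 0)
    (hx : g < x) : 0 < lambdaPoly n s x := by
  have hg1' : 1 < g := hg1.lt_of_ne fun h => by
    rw [← h, lambdaPoly_one] at hg; linarith
  have hmem : g ∈ openSegment ℝ 1 x := by
    rw [openSegment_eq_Ioo (hg1'.trans hx)]; exact ⟨hg1', hx⟩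
  have := (convexOn_lambdaPoly n s).lt_right_of_left_lt (by simp) (by simp; linarith) hmem
    (by rw [lambdaPoly_one, hg]; linarith)
  rwa [hg] at this

lemma pow_mul_lambdaPoly_div (hn : 1 ≤ n) {T M : ℝ} (hM : M ≠ 0) :
    M ^ n * lambdaPoly n s (T / M) = T ^ n - s * M ^ (n - 1) * (n * T - (n - 1) * M) := by
  obtain ⟨k, rfl⟩ : ∃ k, n = k + 1 := ⟨n - 1, by omega⟩
  simp only [lambdaPoly, Nat.add_sub_cancel, div_pow]
  field_simp
  ring

end lambdaPoly

/-- `P_{n,1,s,m}(t)`. -/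
def polyP (n s m t : ℕ) : ℤ :=
  ((t + n).choose n : ℤ) - (s : ℤ) *
    (((t : ℤ) + 1) * ((m + n - 2).choose (n - 1) : ℤ) - ((n : ℤ) - 1) * ((m + n - 2).choose n : ℤ))

/-- `n! · P_{n,1,s,m}(t)`, written with rising factorials and extended to real `s`, `m`, `t`. -/
def risingP (n : ℕ) (s m t : ℝ) : ℝ :=
  ∏ i ∈ range n, (t + i + 1) -
    s * (∏ i ∈ range (n - 1), (m + i)) * (n * t - (n - 1) * m + (2 * n - 1))

lemma factorial_mul_polyP {n m : ℕ} (hn : 1 ≤ n) (hm : 1 ≤ m) (s t : ℕ) :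
    (n ! : ℝ) * polyP n s m t = risingP n s m t := by
  obtain ⟨k, rfl⟩ : ∃ k, n = k + 1 := ⟨n - 1, by omega⟩
  have hsub : m + (k + 1) - 2 = m + k - 1 := by omega
  have hrise_t : ((t + 1).ascFactorial (k + 1) : ℝ) = ∏ i ∈ range (k + 1), ((t : ℝ) + i + 1) := by
    rw [Nat.ascFactorial_eq_prod_range]; push_cast; ring_nf
  have hrise_m : (m.ascFactorial k : ℝ) = ∏ i ∈ range k, ((m : ℝ) + i) := by
    rw [Nat.ascFactorial_eq_prod_range]; push_cast; rfl
  have hchoose_t := Nat.ascFactorial_eq_factorial_mul_choose t (k + 1)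
  have hchoose_m := Nat.ascFactorial_eq_factorial_mul_choose' m k
  have hsucc := Nat.choose_succ_right_eq (m + k - 1) k
  rw [show m + k - 1 - k = m - 1 by omega] at hsucc
  have hsucc' : ((m + k - 1).choose (k + 1) : ℝ) * (k + 1) = ((m + k - 1).choose k) * (m - 1) := by
    exact_mod_cast hsucc
  rw [polyP, hsub, risingP, Nat.add_sub_cancel, ← hrise_t, ← hrise_m, hchoose_t, hchoose_m]
  push_cast [Nat.factorial_succ]
  linear_combination (s : ℝ) * (k ! : ℝ) * (k : ℝ) * hsucc'

lemma polyP_pos_iff {n m : ℕ} (hn : 1 ≤ n) (hm : 1 ≤ m) (s t : ℕ) :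
    0 < polyP n s m t ↔ 0 < risingP n s m t := by
  rw [← factorial_mul_polyP hn hm, ← Int.cast_pos (R := ℝ)]
  exact (mul_pos_iff_of_pos_left (by positivity)).symm

def tailCoeff (n : ℕ) : ℕ := n ^ 2 * (n + 1) ^ (n - 1)

/-- What `mul_pow_le_of_pow_succ_le` needs for `a = n` and `c = tailCoeff n`. -/
def threshold (n : ℕ) : ℕ := tailCoeff n * (n * tailCoeff n) ^ (n - 2)

lemma one_lt_threshold {n : ℕ} (hn : 2 ≤ n) : 1 < threshold n := by
  have hc : 1 < tailCoeff n := by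
    have := Nat.one_le_pow (n - 1) (n + 1) (by omega)
    unfold tailCoeff; nlinarith
  have : 0 < (n * tailCoeff n) ^ (n - 2) := by positivity
  unfold threshold; nlinarith

lemma prod_range_add_add_one_le (n : ℕ) {T : ℝ} (hT : 1 ≤ T) :
    ∏ i ∈ range n, (T + i + 1) ≤ T ^ n + tailCoeff n * T ^ (n - 1) := by
  have hT0 : 0 ≤ T := by linarith
  have hprod : ∏ i ∈ range n, (T + i + 1) ≤ (T + n) ^ n := by
    calc ∏ i ∈ range n, (T + i + 1) ≤ ∏ _i ∈ range n, (T + n) :=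
          prod_le_prod (fun i _ => by positivity) fun i hi => by
            have : (i : ℝ) + 1 ≤ n := by exact_mod_cast mem_range.1 hi
            linarith
      _ = (T + n) ^ n := by rw [prod_const, card_range]
  have hdiff : (T + n) ^ n - T ^ n ≤ n ^ 2 * (T + n) ^ (n - 1) := by
    have := abs_pow_sub_pow_le (T + n) T n
    have hn : |T + n - T| = n := by simp
    rw [hn, abs_of_nonneg (by positivity : (0 : ℝ) ≤ T + n), abs_of_nonneg hT0,
      max_eq_left (by linarith)] at this
    linarith [le_abs_self ((T + n) ^ n - T ^ n)]
  have hbase : (T + n) ^ (n - 1) ≤ (n + 1) ^ (n - 1) * T ^ (n - 1) := by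
    rw [← mul_pow]
    exact pow_le_pow_left₀ (by positivity) (by nlinarith) _
  have hn2 : (0 : ℝ) ≤ n ^ 2 := by positivity
  calc ∏ i ∈ range n, (T + i + 1) ≤ T ^ n + n ^ 2 * (T + n) ^ (n - 1) := by linarith
    _ ≤ T ^ n + n ^ 2 * ((n + 1) ^ (n - 1) * T ^ (n - 1)) := by gcongr
    _ = T ^ n + tailCoeff n * T ^ (n - 1) := by simp only [tailCoeff]; push_cast; ring

lemma mul_pow_le_of_pow_succ_le {k : ℕ} {a c s T M : ℝ} (ha : 0 < a) (hc : 0 ≤ c) (hM : 0 < M)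
    (hT : 0 ≤ T) (h : T ^ (k + 1) ≤ a * s * M ^ (k + 1)) (hs : c * (a * c) ^ k ≤ s) :
    c * T ^ k ≤ s * M ^ k := by
  rcases le_or_gt T (a * c * M) with hTM | hTM
  · calc c * T ^ k ≤ c * (a * c * M) ^ k := by gcongr
      _ = c * (a * c) ^ k * M ^ k := by ring
      _ ≤ s * M ^ k := by gcongr
  · have : a * M * (c * T ^ k) ≤ a * M * (s * M ^ k) := by
      calc a * M * (c * T ^ k) = (a * c * M) * T ^ k := by ring
        _ ≤ T * T ^ k := by gcongr
        _ = T ^ (k + 1) := by ring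
        _ ≤ a * s * M ^ (k + 1) := h
        _ = a * M * (s * M ^ k) := by ring
    exact le_of_mul_le_mul_left this (by positivity)

lemma pow_mul_add_one_le_prod_range (k : ℕ) {M : ℝ} (hM : 0 ≤ M) :
    M ^ (k + 1) * (M + 1) ≤ ∏ i ∈ range (k + 2), (M + i) := by
  rw [prod_range_succ]
  have hpow : M ^ (k + 1) ≤ ∏ i ∈ range (k + 1), (M + i) := by
    calc M ^ (k + 1) = ∏ _i ∈ range (k + 1), M := by rw [prod_const, card_range]
      _ ≤ ∏ i ∈ range (k + 1), (M + i) :=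
        prod_le_prod (fun _ _ => hM) fun i _ => le_add_of_nonneg_right (Nat.cast_nonneg i)
  gcongr
  push_cast
  linarith

lemma risingP_nonpos {n : ℕ} (hn : 3 ≤ n) {s T M : ℝ} (hs : (threshold n : ℝ) ≤ s)
    (hM : 1 ≤ M) (hMT : M ≤ T) (hΛ : T ^ n ≤ s * M ^ (n - 1) * (n * T - (n - 1) * M)) :
    risingP n s M T ≤ 0 := by
  obtain ⟨k, rfl⟩ : ∃ k, n = k + 3 := ⟨n - 3, by omega⟩
  rw [show k + 3 - 1 = k + 2 by omega] at hΛ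
  set D := ((k + 3 : ℕ) : ℝ) * T - ((k + 3 : ℕ) - 1) * M with hD
  have hc : (0 : ℝ) ≤ tailCoeff (k + 3) := Nat.cast_nonneg _
  have hs0 : 0 ≤ s := le_trans (Nat.cast_nonneg _) hs
  have hTD : T ≤ D := by push_cast at hD ⊢; nlinarith
  have hDn : D ≤ (k + 3 : ℕ) * T := by push_cast at hD ⊢; nlinarith
  have hpow : T ^ (k + 2) ≤ (k + 3 : ℕ) * s * M ^ (k + 2) := by
    refine le_of_mul_le_mul_right ?_ (by linarith : 0 < T)
    calc T ^ (k + 2) * T = T ^ (k + 3) := by ring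
      _ ≤ s * M ^ (k + 2) * D := hΛ
      _ ≤ s * M ^ (k + 2) * ((k + 3 : ℕ) * T) := by gcongr
      _ = (k + 3 : ℕ) * s * M ^ (k + 2) * T := by ring
  have hcT : tailCoeff (k + 3) * T ^ (k + 1) ≤ s * M ^ (k + 1) :=
    mul_pow_le_of_pow_succ_le (by positivity) hc (by linarith) (by linarith) hpow
      (by simpa [threshold] using hs)
  have htail : tailCoeff (k + 3) * T ^ (k + 2) ≤ s * M ^ (k + 1) * D := by
    calc tailCoeff (k + 3) * T ^ (k + 2) = tailCoeff (k + 3) * T ^ (k + 1) * T := by ring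
      _ ≤ s * M ^ (k + 1) * T := by gcongr; linarith
      _ ≤ s * M ^ (k + 1) * D := by gcongr
  have hlow := pow_mul_add_one_le_prod_range k (by linarith : 0 ≤ M)
  have hrise := prod_range_add_add_one_le (k + 3) (by linarith : 1 ≤ T)
  have hD0 : 0 ≤ D := by linarith
  have hmain : ∏ i ∈ range (k + 3), (T + i + 1) ≤ s * (∏ i ∈ range (k + 2), (M + i)) * D := by
    calc ∏ i ∈ range (k + 3), (T + i + 1)
        ≤ T ^ (k + 3) + tailCoeff (k + 3) * T ^ (k + 2) := hrise
      _ ≤ s * M ^ (k + 2) * D + s * M ^ (k + 1) * D := add_le_add hΛ htail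
      _ = s * (M ^ (k + 1) * (M + 1)) * D := by ring
      _ ≤ s * (∏ i ∈ range (k + 2), (M + i)) * D := by gcongr
  have hprod0 : 0 ≤ ∏ i ∈ range (k + 2), (M + i) := prod_nonneg fun i _ => by positivity
  simp only [risingP, show k + 3 - 1 = k + 2 by omega]
  nlinarith [mul_nonneg hs0 hprod0]

lemma tendsto_prod_add_div_atTop (n : ℕ) (p : ℝ) (c : ℕ → ℝ) :
    Tendsto (fun k : ℕ => ∏ i ∈ range n, (p + c i / k)) atTop (𝓝 (p ^ n)) := by
  have := tendsto_finsetProd (range n) fun i _ =>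
    (tendsto_const_div_atTop_nhds_zero_nat (c i)).const_add p
  simpa using this

lemma prod_range_mul_add (n : ℕ) {k : ℝ} (hk : k ≠ 0) (p : ℝ) (c : ℕ → ℝ) :
    ∏ i ∈ range n, (k * p + c i) = k ^ n * ∏ i ∈ range n, (p + c i / k) := by
  calc ∏ i ∈ range n, (k * p + c i) = ∏ i ∈ range n, ((p + c i / k) * k) :=
        prod_congr rfl fun i _ => by field_simp
    _ = k ^ n * ∏ i ∈ range n, (p + c i / k) := by rw [← prod_mul_pow_card, card_range, mul_comm]

lemma eventually_risingP_pos {n : ℕ} (hn : 1 ≤ n) {s p q : ℝ}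
    (h : s * q ^ (n - 1) * (n * p - (n - 1) * q) < p ^ n) :
    ∀ᶠ k : ℕ in atTop, 0 < risingP n s (k * q) (k * p) := by
  set f : ℕ → ℝ := fun k => ∏ i ∈ range n, (p + (i + 1 : ℝ) / k) -
    s * (∏ i ∈ range (n - 1), (q + (i : ℝ) / k)) * (n * p - (n - 1) * q + (2 * n - 1) / k)
  have hlim : Tendsto f atTop (𝓝 (p ^ n - s * q ^ (n - 1) * (n * p - (n - 1) * q + 0))) :=
    (tendsto_prod_add_div_atTop n p _).sub
      (((tendsto_prod_add_div_atTop (n - 1) q _).const_mul s).mul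
        ((tendsto_const_div_atTop_nhds_zero_nat _).const_add _))
  have hscale : ∀ k : ℕ, k ≠ 0 → risingP n s (k * q) (k * p) = (k : ℝ) ^ n * f k := by
    intro k hk
    have hk : (k : ℝ) ≠ 0 := by exact_mod_cast hk
    have hpow : (k : ℝ) ^ n = (k : ℝ) ^ (n - 1) * k := (pow_sub_one_mul (by omega) _).symm
    simp only [risingP, f, add_assoc, prod_range_mul_add _ hk]
    rw [hpow]
    field_simp
  rw [add_zero] at hlim
  filter_upwards [hlim.eventually_const_lt (sub_pos.2 h), eventually_ne_atTop 0] with k hfk hk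
  rw [hscale k hk]
  exact mul_pos (by positivity) hfk

lemma le_div_of_risingP_pos {n : ℕ} (hn : 3 ≤ n) {s g : ℝ} (hs : (threshold n : ℝ) ≤ s)
    (hg : lambdaPoly n s g = 0) {t m : ℕ} (hm : 1 ≤ m) (hmt : m ≤ t)
    (hpos : 0 < risingP n s m t) : g ≤ t / m := by
  have hM : (1 : ℝ) ≤ m := by exact_mod_cast hm
  have hMT : (m : ℝ) ≤ t := by exact_mod_cast hmt
  have hs1 : 1 ≤ s := le_trans (by exact_mod_cast (one_lt_threshold (by omega)).le) hs
  by_contra! hlt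
  have hΛ := lambdaPoly_nonpos_of_le_root hs1 hg ((one_le_div (by linarith)).2 hMT) hlt.le
  have hhom := pow_mul_lambdaPoly_div (s := s) (T := t) (by omega : 1 ≤ n)
    (by linarith : (m : ℝ) ≠ 0)
  have : (m : ℝ) ^ n * lambdaPoly n s (t / m) ≤ 0 :=
    mul_nonpos_of_nonneg_of_nonpos (by positivity) hΛ
  exact hpos.not_ge (risingP_nonpos hn hs hM hMT (by linarith))

lemma exists_div_lt_of_risingP_pos {n : ℕ} (hn : 1 ≤ n) {s g w : ℝ} (hs : 1 < s) (hg1 : 1 ≤ g)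
    (hg : lambdaPoly n s g = 0) (hw : g < w) :
    ∃ t m : ℕ, 1 ≤ m ∧ m ≤ t ∧ 0 < risingP n s m t ∧ (t : ℝ) / m < w := by
  obtain ⟨q, hq⟩ := exists_nat_gt (w - g)⁻¹
  have hq0 : (0 : ℝ) < q := (inv_pos.2 (sub_pos.2 hw)).trans hq
  obtain ⟨p, hgp, hpw⟩ := exists_div_btwn hw hq
  have hqp : (q : ℝ) < p := by rw [lt_div_iff₀ hq0] at hgp; nlinarith
  lift p to ℕ using by exact_mod_cast (hq0.trans hqp).le
  push_cast at hqp hgp hpw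
  have hΛ := lambdaPoly_pos_of_root_lt hs hg1 hg hgp
  have hhom := pow_mul_lambdaPoly_div (s := s) (T := p) hn hq0.ne'
  have hlead : s * q ^ (n - 1) * (n * p - (n - 1) * q) < p ^ n := by
    linarith [mul_pos (pow_pos hq0 n) hΛ]
  obtain ⟨k, hk, hk1⟩ := ((eventually_risingP_pos hn hlead).and (eventually_ge_atTop 1)).exists
  have hq1 : 1 ≤ q := by exact_mod_cast hq0
  refine ⟨k * p, k * q, Nat.mul_le_mul hk1 hq1,
    Nat.mul_le_mul_left k (by exact_mod_cast hqp.le), by push_cast; exact hk, ?_⟩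
  · have hk0 : (k : ℝ) ≠ 0 := by positivity
    push_cast
    rwa [mul_div_mul_left _ _ hk0]

/-- For every integer `n ≥ 3` there exists `S` such that for all `s ≥ S`,
`inf{ t/m : t ≥ m ≥ 1, C(t+n, n) − s·((t+1)·C(m+n−2, n−1) − (n−1)·C(m+n−2, n)) > 0 }`
equals `g_{n,1,s}`, the unique real root `≥ 1` of `x^n − n·s·x + (n−1)·s`;
i.e. `e_{n,1,s} = g_{n,1,s}` for all sufficiently large `s`. -/
theorem stmt_11 (n : ℕ) (hn : 3 ≤ n) :
    ∃ S : ℕ, ∀ s : ℕ, S ≤ s →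
      ∀ g : ℝ, 1 ≤ g → g ^ n - (n : ℝ) * (s : ℝ) * g + ((n : ℝ) - 1) * (s : ℝ) = 0 →
        sInf {x : ℝ | ∃ t m : ℕ, 1 ≤ m ∧ m ≤ t ∧
            0 < (Nat.choose (t + n) n : ℤ) - (s : ℤ) *
              (((t : ℤ) + 1) * (Nat.choose (m + n - 2) (n - 1) : ℤ)
                - ((n : ℤ) - 1) * (Nat.choose (m + n - 2) n : ℤ)) ∧
            x = (t : ℝ) / (m : ℝ)}
          = g := by
  refine ⟨threshold n, fun s hsS g hg1 hg => ?_⟩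
  show sInf {x : ℝ | ∃ t m : ℕ, 1 ≤ m ∧ m ≤ t ∧ 0 < polyP n s m t ∧ x = t / m} = g
  have hs : (threshold n : ℝ) ≤ s := by exact_mod_cast hsS
  have hs1 : (1 : ℝ) < s := lt_of_lt_of_le (by exact_mod_cast one_lt_threshold (by omega)) hs
  have hexists : ∀ w, g < w → ∃ x ∈ {x : ℝ | ∃ t m : ℕ, 1 ≤ m ∧ m ≤ t ∧ 0 < polyP n s m t ∧
      x = t / m}, x < w := by
    intro w hw
    obtain ⟨t, m, hm, hmt, hpos, hlt⟩ := exists_div_lt_of_risingP_pos (by omega) hs1 hg1 hg hw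
    exact ⟨_, ⟨t, m, hm, hmt, (polyP_pos_iff (by omega) hm s t).2 hpos, rfl⟩, hlt⟩
  obtain ⟨x, hx, -⟩ := hexists (g + 1) (by linarith)
  refine csInf_eq_of_forall_ge_of_forall_gt_exists_lt ⟨x, hx⟩ ?_ hexists
  rintro _ ⟨t, m, hm, hmt, hpos, rfl⟩
  exact le_div_of_risingP_pos hn hs hg hm hmt ((polyP_pos_iff (by omega) hm s t).1 hpos)
end

section
/- Let s ≥ 7 be an integer, let m_1,…,m_s be nonnegative integers, not all zero, and let d be an integer with d ≥ m_j for every j. Set m := (m_1 + … + m_s)/s. If C(d+3, 3) − Σ_{j=1}^s (1/6)·(3d − 2m_j + 5)·m_j·(m_j + 1) > 0, then d/m ≥ g_{3,1,s}, where g_{3,1,s} is the unique real root ≥ 1 of the polynomial x^3 − 3sx + 2s. -/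
/-!
Put `f(x) = (3d − 2x + 5) x (x + 1)`, so that the hypothesis reads `∑ f(m_j) < (d+1)(d+2)(d+3)`,
and suppose `d < g m`. On the integers of `[0, d]`, `f` lies above its secant through `a` and
`a + 1` whenever `4a ≤ d + 1`, because the third root of `f − secant` is then `≥ d`; summing,
`∑ f(m_j) ≥ s · secant(m)`. Take `a = min(⌊m⌋, ⌊(d+1)/4⌋)`. If `m ≤ a + 1`, the secant lies above
`f` at `m`, `f` increases on `[d/g, m]`, and `g³ = s(3g − 2)` turns `s f(d/g) ≥ (d+1)(d+2)(d+3)`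
into the nonnegativity of a quadratic in `d`, which holds once `d` is not too small for the given
`s`. Otherwise `a + 1 ≈ d/4`, and already `7 f(a + 1) ≥ (d+1)(d+2)(d+3)`. The finitely many
remaining pairs `(s, d)` are settled by a rational upper bound on `g` and the integrality of
`∑ m_j`.
-/

open Finset

/-- Six times the number of conditions a line of multiplicity `x` imposes on surfaces of degree
`d` in `ℙ³`. -/
def lineConditions {R : Type*} [CommRing R] (d x : R) : R := (3 * d - 2 * x + 5) * x * (x + 1)

@[simp, norm_cast]
lemma Int.cast_lineConditions {R : Type*} [CommRing R] (d x : ℤ) :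
    ((lineConditions d x : ℤ) : R) = lineConditions (d : R) (x : R) := by
  simp [lineConditions]

/-- The secant of `lineConditions d` through `a` and `a + 1`. -/
def secant {R : Type*} [CommRing R] (d a x : R) : R :=
  lineConditions d a + 6 * (a + 1) * (d - a + 1) * (x - a)

section CommRing

variable {R : Type*} [CommRing R]

lemma lineConditions_sub_secant (d a x : R) :
    lineConditions d x - secant d a x = (x - a) * (x - a - 1) * (3 * d + 1 - 4 * a - 2 * x) := by
  unfold secant lineConditions; ring

lemma secant_add_one (d a : R) : secant d a (a + 1) = lineConditions d (a + 1) := by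
  unfold secant lineConditions; ring

lemma sum_secant {ι : Type*} [Fintype ι] (d a : R) (n : ι → R) :
    ∑ i, secant d a (n i) = Fintype.card ι * lineConditions d a +
      6 * (a + 1) * (d - a + 1) * (∑ i, n i - Fintype.card ι * a) := by
  simp only [secant, sum_add_distrib, ← mul_sum, sum_sub_distrib, sum_const, card_univ,
    nsmul_eq_mul]

end CommRing

section Ordered

variable {R : Type*} [CommRing R] [LinearOrder R] [IsStrictOrderedRing R]

lemma lineConditions_le_secant {d a x : R} (hd : 2 ≤ d) (ha : 4 * a ≤ d + 1) (hax : a ≤ x)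
    (hx : x ≤ a + 1) : lineConditions d x ≤ secant d a x := by
  have h := lineConditions_sub_secant d a x
  nlinarith [mul_nonneg (mul_nonneg (sub_nonneg.2 hax) (sub_nonneg.2 hx))
    (by linarith : (0 : R) ≤ 3 * d + 1 - 4 * a - 2 * x)]

lemma lineConditions_le_lineConditions {d x y : R} (hx : 0 ≤ x) (hxy : x ≤ y)
    (h : 2 * (x + y) ≤ 3 * (d + 1)) : lineConditions d x ≤ lineConditions d y := by
  have key : lineConditions d y - lineConditions d x =
      (y - x) * ((x + y) * (3 * (d + 1) - 2 * (x + y)) + 2 * x * y + 3 * d + 5) := by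
    unfold lineConditions; ring
  have : 0 ≤ (y - x) * ((x + y) * (3 * (d + 1) - 2 * (x + y)) + 2 * x * y + 3 * d + 5) := by
    apply mul_nonneg (by linarith)
    have := mul_nonneg (by linarith : (0 : R) ≤ x + y)
      (by linarith : (0 : R) ≤ 3 * (d + 1) - 2 * (x + y))
    nlinarith [mul_nonneg hx (hx.trans hxy)]
  linarith

end Ordered

lemma secant_le_lineConditions {d a n : ℤ} (hn : n ≤ d) (ha : 4 * a ≤ d + 1) :
    secant d a n ≤ lineConditions d n := by
  have h := lineConditions_sub_secant d a n
  have hint : 0 ≤ (n - a) * (n - a - 1) := by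
    rcases le_or_gt n a with h | h <;> nlinarith
  nlinarith [mul_nonneg hint (by linarith : (0 : ℤ) ≤ 3 * d + 1 - 4 * a - 2 * n)]

lemma card_mul_secant_le_sum {ι : Type*} [Fintype ι] {d a : ℤ} (n : ι → ℤ) (hn : ∀ i, n i ≤ d)
    (ha : 4 * a ≤ d + 1) :
    Fintype.card ι * lineConditions d a +
        6 * (a + 1) * (d - a + 1) * (∑ i, n i - Fintype.card ι * a) ≤
      ∑ i, lineConditions d (n i) := by
  rw [← sum_secant]
  exact sum_le_sum fun i _ => secant_le_lineConditions (hn i) ha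

section Root

variable {s g : ℝ}

lemma le_sq_of_root (hs : 0 ≤ s) (hg1 : 1 ≤ g) (hg : g ^ 3 - 3 * s * g + 2 * s = 0) :
    s ≤ g ^ 2 := by
  nlinarith [mul_nonneg hs (sub_nonneg.2 hg1)]

lemma sq_lt_of_root (hs : 0 < s) (hg1 : 1 ≤ g) (hg : g ^ 3 - 3 * s * g + 2 * s = 0) :
    g ^ 2 < 3 * s := by
  nlinarith

lemma lt_root_of_neg {c : ℝ} (hs : 0 ≤ s) (hg1 : 1 ≤ g) (hg : g ^ 3 - 3 * s * g + 2 * s = 0)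
    (hcub : c ^ 3 - 3 * s * c + 2 * s < 0) : c < g := by
  by_contra! h
  have := le_sq_of_root hs hg1 hg
  nlinarith [mul_nonneg (sub_nonneg.2 h) (by nlinarith : (0 : ℝ) ≤ c ^ 2 + c * g + g ^ 2 - 3 * s)]

lemma root_lt_of_pos {c : ℝ} (hs : 0 ≤ s) (hg1 : 1 ≤ g) (hg : g ^ 3 - 3 * s * g + 2 * s = 0)
    (hc : 0 ≤ c) (hcs : s ≤ c ^ 2) (hcub : 0 < c ^ 3 - 3 * s * c + 2 * s) : g < c := by
  by_contra! h
  have := le_sq_of_root hs hg1 hg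
  nlinarith [mul_nonneg (sub_nonneg.2 h) (by nlinarith : (0 : ℝ) ≤ g ^ 2 + g * c + c ^ 2 - 3 * s)]

end Root

/-- `g³ f(d, d/g) − (3g − 2)(d + 1)(d + 2)(d + 3)` for `f = lineConditions d`, expanded. -/
def deficit (g d : ℝ) : ℝ :=
  3 * (g - 1) * (g - 4) * d ^ 2 + (5 * g ^ 2 - 33 * g + 22) * d + 12 - 18 * g

lemma deficit_nonneg_of_le {c D g d : ℝ} (hc : 4 ≤ c) (hcg : c ≤ g) (hD : 2 ≤ D) (hDd : D ≤ d)
    (hslope : 0 ≤ 6 * (c - 1) * (c - 4) * D + 5 * c ^ 2 - 33 * c + 22) (hval : 0 ≤ deficit c D) :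
    0 ≤ deficit g d := by
  unfold deficit at *
  have hg : 0 ≤ (g - c) * (3 * d ^ 2 * (g + c - 5) + 5 * d * (g + c) - 33 * d - 18) := by
    apply mul_nonneg (by linarith)
    nlinarith [sq_nonneg d]
  have hd : 0 ≤ (d - D) * (3 * (c - 1) * (c - 4) * (d + D) + 5 * c ^ 2 - 33 * c + 22) := by
    apply mul_nonneg (by linarith)
    have hc14 := mul_nonneg (by linarith : (0 : ℝ) ≤ c - 1) (by linarith : (0 : ℝ) ≤ c - 4)
    nlinarith [mul_nonneg hc14 (by linarith : (0 : ℝ) ≤ d - D)]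
  nlinarith

lemma cube_le_mul_lineConditions_div {s g d : ℝ} (hg : 1 ≤ g) (hgs : g ^ 3 = s * (3 * g - 2))
    (hdef : 0 ≤ deficit g d) : (d + 1) * (d + 2) * (d + 3) ≤ s * lineConditions d (d / g) := by
  have hg0 : g ≠ 0 := by positivity
  have key : (3 * g - 2) * (s * lineConditions d (d / g)) =
      (3 * g - 2) * ((d + 1) * (d + 2) * (d + 3)) + deficit g d := by
    rw [← mul_assoc, mul_comm _ s, ← hgs]
    unfold lineConditions deficit
    field_simp
    ring
  nlinarith

lemma cube_le_mul_lineConditions {s g d m : ℝ} (hg : 4 ≤ g) (hgs : g ^ 3 = s * (3 * g - 2))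
    (hdef : 0 ≤ deficit g d) (hd : 0 ≤ d) (hdm : d ≤ g * m) (hm : 4 * m ≤ d + 5) :
    (d + 1) * (d + 2) * (d + 3) ≤ s * lineConditions d m := by
  have hs : 0 ≤ s := by
    have : 0 < s * (3 * g - 2) := hgs ▸ by positivity
    nlinarith
  have hdg : d / g ≤ d / 4 := div_le_div_of_nonneg_left hd (by norm_num) hg
  have hmono : lineConditions d (d / g) ≤ lineConditions d m :=
    lineConditions_le_lineConditions (by positivity) (by rwa [div_le_iff₀ (by linarith), mul_comm])
      (by linarith)
  exact (cube_le_mul_lineConditions_div (by linarith) hgs hdef).trans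
    (mul_le_mul_of_nonneg_left hmono hs)

lemma cube_le_mul_lineConditions_of_quarter {s d b : ℝ} (hs : 7 ≤ s) (hd : 2 ≤ d)
    (hb1 : d + 2 ≤ 4 * b) (hb2 : 4 * b ≤ d + 5) :
    (d + 1) * (d + 2) * (d + 3) ≤ s * lineConditions d b := by
  unfold lineConditions
  have hb0 : 0 ≤ b := by linarith
  have hfb : 0 ≤ (3 * d - 2 * b + 5) * b * (b + 1) := by
    apply mul_nonneg (mul_nonneg (by linarith) hb0); linarith
  have h7 := mul_le_mul_of_nonneg_right hs hfb
  have h1 := sub_nonneg.2 hb1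
  have h2 := sub_nonneg.2 hb2
  have hd0 : (0 : ℝ) ≤ d := by linarith
  nlinarith [mul_nonneg h1 h2, mul_nonneg (mul_nonneg h1 h2) hd0, mul_nonneg h1 hd0,
    mul_nonneg (mul_nonneg h1 hd0) hd0, sq_nonneg (4 * b - d - 2), mul_nonneg h2 hd0]

lemma cube_le_mul_secant {s g d m a : ℝ} (hs : 7 ≤ s) (hg : 4 ≤ g) (hgs : g ^ 3 = s * (3 * g - 2))
    (hdef : 0 ≤ deficit g d) (hd : 2 ≤ d) (hdm : d ≤ g * m) (ha0 : 0 ≤ a) (ha : 4 * a ≤ d + 1)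
    (ham : a ≤ m) (hcap : m ≤ a + 1 ∨ d ≤ 4 * a + 2) :
    (d + 1) * (d + 2) * (d + 3) ≤ s * secant d a m := by
  by_cases hm : m ≤ a + 1
  · exact (cube_le_mul_lineConditions hg hgs hdef (by linarith) hdm (by linarith)).trans
      (mul_le_mul_of_nonneg_left (lineConditions_le_secant hd ha ham hm) (by linarith))
  have hd4 : d ≤ 4 * a + 2 := hcap.resolve_left hm
  have hsec : secant d a (a + 1) ≤ secant d a m := by
    unfold secant
    have : 0 ≤ 6 * (a + 1) * (d - a + 1) := by apply mul_nonneg <;> linarith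
    gcongr
    linarith
  calc (d + 1) * (d + 2) * (d + 3)
      ≤ s * lineConditions d (a + 1) :=
        cube_le_mul_lineConditions_of_quarter hs hd (by linarith) (by linarith)
    _ = s * secant d a (a + 1) := by rw [secant_add_one]
    _ ≤ s * secant d a m := mul_le_mul_of_nonneg_left hsec (by linarith)

lemma exists_secant_ge_of_deficit {s d M : ℕ} {g : ℝ} (hs : 7 ≤ s) (hd : 2 ≤ d) (hg : 4 ≤ g)
    (hgs : g ^ 3 = s * (3 * g - 2)) (hdef : 0 ≤ deficit g d) (hM : (s : ℝ) * d < g * M) :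
    ∃ a : ℕ, 4 * a ≤ d + 1 ∧ ((d : ℤ) + 1) * (d + 2) * (d + 3) ≤
      s * lineConditions (d : ℤ) a + 6 * (a + 1) * (d - a + 1) * (M - s * a) := by
  set a := min (M / s) ((d + 1) / 4) with ha_def
  have ha : 4 * a ≤ d + 1 := by omega
  refine ⟨a, ha, ?_⟩
  have hs0 : (0 : ℝ) < s := by positivity
  have ham : (a : ℝ) ≤ M / s := by
    rw [le_div_iff₀ hs0]
    exact_mod_cast (Nat.mul_le_mul_right s (min_le_left _ _)).trans (Nat.div_mul_le_self M s)
  have hcap : (M / s : ℝ) ≤ a + 1 ∨ (d : ℝ) ≤ 4 * a + 2 := by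
    rcases min_choice (M / s) ((d + 1) / 4) with h | h
    · left
      rw [div_le_iff₀ hs0]
      exact_mod_cast (Nat.lt_mul_div_succ M (by omega : 0 < s)).le.trans_eq
        (by rw [ha_def, h, mul_comm])
    · right
      exact_mod_cast (by omega : d ≤ 4 * a + 2)
  have hdm : (d : ℝ) ≤ g * (M / s) := by
    rw [mul_div_assoc', le_div_iff₀ hs0]
    linarith
  have key := cube_le_mul_secant (by exact_mod_cast hs) hg hgs hdef (by exact_mod_cast hd) hdm
    a.cast_nonneg (by exact_mod_cast ha) ham hcap
  have hsec : (s : ℝ) * secant (d : ℝ) a (M / s) =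
      s * lineConditions (d : ℝ) a + 6 * (a + 1) * (d - a + 1) * (M - s * a) := by
    unfold secant
    field_simp
  rw [← Int.cast_le (R := ℝ)]
  push_cast
  rwa [← hsec]

lemma mul_sq_lt_of_root {s d M : ℕ} {g : ℝ} (hs : 0 < s) (hg1 : 1 ≤ g)
    (hg : g ^ 3 - 3 * s * g + 2 * s = 0) (hM : (s : ℝ) * d < g * M) : s * d ^ 2 < 3 * M ^ 2 := by
  have hs0 : (0 : ℝ) < s := by exact_mod_cast hs
  have hg2 := sq_lt_of_root hs0 hg1 hg
  have h : (s : ℝ) * (s * d ^ 2) < s * (3 * M ^ 2) := by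
    calc (s : ℝ) * (s * d ^ 2) = (s * d) ^ 2 := by ring
      _ < (g * M) ^ 2 := by gcongr
      _ = g ^ 2 * M ^ 2 := by ring
      _ ≤ 3 * s * M ^ 2 := by gcongr
      _ = s * (3 * M ^ 2) := by ring
  exact_mod_cast lt_of_mul_lt_mul_left h hs0.le

lemma mul_lt_mul_of_root_lt {s d M p q : ℕ} {g : ℝ} (hq : 0 < q) (hgc : g < p / q)
    (hM : (s : ℝ) * d < g * M) : q * (s * d) < p * M := by
  have h : (s : ℝ) * d < p / q * M := hM.trans_le (by gcongr)
  rw [div_mul_eq_mul_div, lt_div_iff₀ (by positivity)] at h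
  exact_mod_cast (by linarith : (q : ℝ) * (s * d) < p * M)

lemma exists_secant_ge {s d M : ℕ} {g : ℝ} (hs : 7 ≤ s) (hg1 : 1 ≤ g)
    (hg : g ^ 3 - 3 * s * g + 2 * s = 0) (hM : (s : ℝ) * d < g * M) :
    ∃ a : ℕ, 4 * a ≤ d + 1 ∧ ((d : ℤ) + 1) * (d + 2) * (d + 3) ≤
      s * lineConditions (d : ℤ) a + 6 * (a + 1) * (d - a + 1) * (M - s * a) := by
  have hs0 : (0 : ℝ) ≤ s := s.cast_nonneg
  have hgs : g ^ 3 = s * (3 * g - 2) := by linarith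
  by_cases hd3 : d ≤ 3
  · have h := mul_sq_lt_of_root (by omega) hg1 hg hM
    have hM6 : ((d : ℤ) + 2) * (d + 3) ≤ 6 * M := by
      have h7 : 7 * d ^ 2 < 3 * M ^ 2 := (Nat.mul_le_mul_right _ hs).trans_lt h
      have : (d + 2) * (d + 3) ≤ 6 * M := by
        by_contra! hlt
        have : M ≤ 4 := by interval_cases d <;> omega
        interval_cases M <;> interval_cases d <;> omega
      exact_mod_cast this
    refine ⟨0, by omega, ?_⟩
    norm_num [lineConditions]
    nlinarith
  have hd4 : 4 ≤ d := by omega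
  -- For `s = 7, 8, 9` and `d` below `17, 7, 5` the deficit may be negative; these cases are
  -- checked one by one, using the integrality of `M` and the witness `(d + 1) / 5`.
  obtain rfl | rfl | rfl | hs10 : s = 7 ∨ s = 8 ∨ s = 9 ∨ 10 ≤ s := by omega
  · by_cases hd : d ≤ 16
    · have := mul_lt_mul_of_root_lt (p := 98) (q := 23) (by norm_num)
        (root_lt_of_pos hs0 hg1 hg (by norm_num) (by norm_num) (by norm_num)) hM
      refine ⟨(d + 1) / 5, by omega, ?_⟩
      interval_cases d <;> norm_num [lineConditions] <;> omega
    · have hc := lt_root_of_neg (c := 21 / 5) hs0 hg1 hg (by norm_num)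
      exact exists_secant_ge_of_deficit hs (by omega) (by linarith) hgs
        (deficit_nonneg_of_le (D := 17) (by norm_num) hc.le (by norm_num)
          (by exact_mod_cast (by omega : 17 ≤ d)) (by norm_num) (by norm_num [deficit])) hM
  · by_cases hd : d ≤ 6
    · have := mul_lt_mul_of_root_lt (p := 41) (q := 9) (by norm_num)
        (root_lt_of_pos hs0 hg1 hg (by norm_num) (by norm_num) (by norm_num)) hM
      refine ⟨(d + 1) / 5, by omega, ?_⟩
      interval_cases d <;> norm_num [lineConditions] <;> omega
    · have hc := lt_root_of_neg (c := 113 / 25) hs0 hg1 hg (by norm_num)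
      exact exists_secant_ge_of_deficit hs (by omega) (by linarith) hgs
        (deficit_nonneg_of_le (D := 7) (by norm_num) hc.le (by norm_num)
          (by exact_mod_cast (by omega : 7 ≤ d)) (by norm_num) (by norm_num [deficit])) hM
  · by_cases hd : d ≤ 4
    · have := mul_lt_mul_of_root_lt (p := 34) (q := 7) (by norm_num)
        (root_lt_of_pos hs0 hg1 hg (by norm_num) (by norm_num) (by norm_num)) hM
      obtain rfl : d = 4 := by omega
      refine ⟨1, by omega, ?_⟩
      norm_num [lineConditions]
      omega
    · have hc := lt_root_of_neg (c := 241 / 50) hs0 hg1 hg (by norm_num)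
      exact exists_secant_ge_of_deficit hs (by omega) (by linarith) hgs
        (deficit_nonneg_of_le (D := 5) (by norm_num) hc.le (by norm_num)
          (by exact_mod_cast (by omega : 5 ≤ d)) (by norm_num) (by norm_num [deficit])) hM
  · have hs10 : (10 : ℝ) ≤ s := by exact_mod_cast hs10
    have hc := lt_root_of_neg (c := 51 / 10) hs0 hg1 hg (by linarith)
    exact exists_secant_ge_of_deficit hs (by omega) (by linarith) hgs
      (deficit_nonneg_of_le (D := 4) (by norm_num) hc.le (by norm_num)
        (by exact_mod_cast hd4) (by norm_num) (by norm_num [deficit])) hM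

lemma sum_lineConditions_lt_of_hilbert_pos {ι : Type*} [Fintype ι] (d : ℕ) (n : ι → ℕ)
    (hP : 0 < (Nat.choose (d + 3) 3 : ℝ) -
      ∑ i, (1 / 6 : ℝ) * (3 * (d : ℝ) - 2 * (n i : ℝ) + 5) * (n i : ℝ) * ((n i : ℝ) + 1)) :
    ∑ i, lineConditions (d : ℤ) (n i) < ((d : ℤ) + 1) * (d + 2) * (d + 3) := by
  have hchoose : (Nat.choose (d + 3) 3 : ℝ) = (d + 1) * (d + 2) * (d + 3) / 6 := by
    rw [← Nat.choose_symm_add, Nat.cast_add_choose]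
    push_cast [Nat.factorial_succ]
    field_simp
    ring
  have hsum : ∑ i, (1 / 6 : ℝ) * (3 * (d : ℝ) - 2 * (n i : ℝ) + 5) * (n i : ℝ) * ((n i : ℝ) + 1) =
      (∑ i, lineConditions (d : ℝ) (n i)) / 6 := by
    rw [sum_div]
    refine sum_congr rfl fun i _ => ?_
    unfold lineConditions
    ring
  rw [← Int.cast_lt (R := ℝ)]
  push_cast
  linarith

/-- Let `s ≥ 7`, let `m_1,…,m_s ≥ 0` be integers, not all zero, and let `d`
be an integer with `d ≥ m_j` for all `j`. Set `m = (Σ_j m_j)/s`. If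
`C(d+3, 3) − Σ_j (1/6)·(3d − 2m_j + 5)·m_j·(m_j + 1) > 0`, then `d/m ≥ g_{3,1,s}`, where
`g_{3,1,s}` is the unique real root `≥ 1` of `x^3 − 3sx + 2s`. -/
theorem stmt_12 (s : ℕ) (hs : 7 ≤ s) (mj : Fin s → ℕ) (hnz : ∃ j, mj j ≠ 0)
    (d : ℕ) (hd : ∀ j, mj j ≤ d)
    (g : ℝ) (hg1 : 1 ≤ g) (hg : g ^ 3 - 3 * (s : ℝ) * g + 2 * (s : ℝ) = 0)
    (hP : 0 < (Nat.choose (d + 3) 3 : ℝ) -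
      ∑ j, (1 / 6 : ℝ) * (3 * (d : ℝ) - 2 * (mj j : ℝ) + 5) * (mj j : ℝ) * ((mj j : ℝ) + 1)) :
    (d : ℝ) / ((∑ j, (mj j : ℝ)) / (s : ℝ)) ≥ g := by
  obtain ⟨j₀, hj₀⟩ := hnz
  have hs0 : (0 : ℝ) < s := by positivity
  have hM : (0 : ℝ) < ∑ j, (mj j : ℝ) := (Nat.cast_pos.2 (Nat.pos_of_ne_zero hj₀)).trans_le
    (single_le_sum (fun j _ => (mj j).cast_nonneg) (mem_univ j₀))
  rw [ge_iff_le, le_div_iff₀ (by positivity), ← not_lt, mul_div_assoc', lt_div_iff₀ hs0]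
  intro hlt
  obtain ⟨a, ha, hcube⟩ := exists_secant_ge (M := ∑ j, mj j) hs hg1 hg (by push_cast; linarith)
  have hsec := card_mul_secant_le_sum (fun j => (mj j : ℤ)) (fun j => by exact_mod_cast hd j)
    (by exact_mod_cast ha : 4 * (a : ℤ) ≤ d + 1)
  have hsum := sum_lineConditions_lt_of_hilbert_pos d mj hP
  simp only [Fintype.card_fin] at hsec
  push_cast at hcube
  linarith
end

section
/- The infimum of the set { t/m : t, m integers with t ≥ m ≥ 1 and C(t+3, 3) − (3t − 2m + 5)·m·(m+1) > 0 } equals 27/7. (Here C(t+3,3) − (3t−2m+5)m(m+1) = P_{3,1,6,m}(t) is the value of the Hilbert polynomial of the ideal of 6 disjoint lines in P^3 taken with multiplicity m; hence the expected Waldschmidt constant e_{3,1,6} equals 27/7.) -/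
lemma c2 (t : ℕ) : 2 * Nat.choose (t+2) 2 = (t+1)*(t+2) := by
  induction t with
  | zero => rfl
  | succ n ih =>
    rw [show n+1+2 = (n+2)+1 from rfl, Nat.choose_succ_succ, Nat.choose_one_right]
    ring_nf
    ring_nf at ih
    omega

lemma c3 (t : ℕ) : 6 * Nat.choose (t+3) 3 = (t+1)*(t+2)*(t+3) := by
  induction t with
  | zero => rfl
  | succ n ih =>
    rw [show n+1+3 = (n+3)+1 from rfl, Nat.choose_succ_succ, show n+3 = (n+1)+2 from rfl]
    have := c2 (n+1)
    ring_nf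
    ring_nf at ih this
    omega

lemma key (t m : ℤ) (h1 : 1 ≤ m) (h2 : m ≤ t) (h3 : 7*t + 1 ≤ 27*m) :
    (t+1)*(t+2)*(t+3) ≤ 6*(3*t-2*m+5)*m*(m+1) := by
  rcases le_or_gt 5 m with h5 | h5
  · nlinarith [mul_nonneg (mul_nonneg (sub_nonneg.2 h2) (by linarith : (0:ℤ) ≤ 27*m - 1 - 7*t)) (by linarith : (0:ℤ) ≤ t), mul_nonneg (sub_nonneg.2 h2) (by linarith : (0:ℤ) ≤ 27*m-1-7*t), mul_nonneg (mul_nonneg (sub_nonneg.2 h2) (by linarith : (0:ℤ) ≤ 27*m - 1 - 7*t)) (by linarith : (0:ℤ) ≤ m), sq_nonneg (t-m), sq_nonneg (27*m-1-7*t)]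
  · have ht : t ≤ 15 := by omega
    interval_cases m <;> interval_cases t <;> omega

/-- `inf{ t/m : t ≥ m ≥ 1, C(t+3, 3) − (3t − 2m + 5)·m·(m+1) > 0 } = 27/7`;
i.e. the expected Waldschmidt constant `e_{3,1,6}` equals `27/7`. -/
theorem stmt_13 :
    sInf {x : ℝ | ∃ t m : ℕ, 1 ≤ m ∧ m ≤ t ∧
        0 < (Nat.choose (t + 3) 3 : ℤ)
          - (3 * (t : ℤ) - 2 * (m : ℤ) + 5) * (m : ℤ) * ((m : ℤ) + 1) ∧
        x = (t : ℝ) / (m : ℝ)}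
      = 27 / 7 := by
  have hch : Nat.choose 30 3 = 4060 := by decide
  have hmem : (27 / 7 : ℝ) ∈ {x : ℝ | ∃ t m : ℕ, 1 ≤ m ∧ m ≤ t ∧
        0 < (Nat.choose (t + 3) 3 : ℤ)
          - (3 * (t : ℤ) - 2 * (m : ℤ) + 5) * (m : ℤ) * ((m : ℤ) + 1) ∧
        x = (t : ℝ) / (m : ℝ)} := by
    refine ⟨27, 7, by norm_num, by norm_num, ?_, by norm_num⟩
    norm_num [hch]
  have hlow : ∀ x ∈ {x : ℝ | ∃ t m : ℕ, 1 ≤ m ∧ m ≤ t ∧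
        0 < (Nat.choose (t + 3) 3 : ℤ)
          - (3 * (t : ℤ) - 2 * (m : ℤ) + 5) * (m : ℤ) * ((m : ℤ) + 1) ∧
        x = (t : ℝ) / (m : ℝ)}, (27 / 7 : ℝ) ≤ x := by
    rintro x ⟨t, m, h1, h2, hP, rfl⟩
    have hm : (0 : ℝ) < m := by exact_mod_cast h1
    rw [div_le_div_iff₀ (by norm_num) hm]
    have hint : 27 * (m : ℤ) ≤ 7 * t := by
      by_contra hc
      push_neg at hc
      have h3 : 7 * (t : ℤ) + 1 ≤ 27 * m := by omega
      have hk := key t m (by exact_mod_cast h1) (by exact_mod_cast h2) h3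
      have hc3 : (6 * Nat.choose (t + 3) 3 : ℤ) = ((t : ℤ)+1)*((t : ℤ)+2)*((t : ℤ)+3) := by
        exact_mod_cast c3 t
      nlinarith [hP]
    calc (27 : ℝ) * m = ((27 * m : ℤ) : ℝ) := by push_cast; ring
      _ ≤ ((7 * t : ℤ) : ℝ) := by exact_mod_cast hint
      _ = (t : ℝ) * 7 := by push_cast; ring
  exact le_antisymm (csInf_le ⟨27 / 7, hlow⟩ hmem) (le_csInf ⟨_, hmem⟩ hlow)
end

section
/- For all integers a ≥ 0, m ≥ 1 and every integer t, one has Σ_{i=0}^{m−1} (t − i + 1)·C(i+a, a) = (t+1)·C(m+a, a+1) − (a+1)·C(m+a, a+2). Consequently, for integers n ≥ 2 and t ≥ m ≥ 1, c_{n,1,m,t} = (t+1)·C(m+n−2, n−1) − (n−1)·C(m+n−2, n). -/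
/-! Induction on `m`: Pascal's rule on both binomials together with the absorption identity
`(a+1)·C(m+a, a+1) = m·C(m+a, a)`. The statement about `c_{n,1,m,t}` is the case `a = n − 2`,
since `C(t−i+1, 1) = t−i+1` for `i < m ≤ t`. -/

open Finset

theorem Nat.succ_mul_add_choose_succ (m a : ℕ) :
    (a + 1) * (m + a).choose (a + 1) = m * (m + a).choose a := by
  rw [mul_comm, Nat.choose_succ_right_eq, Nat.add_sub_cancel, mul_comm]

theorem sum_range_sub_add_one_mul_choose {R : Type*} [CommRing R] (a m : ℕ) (t : R) :
    ∑ i ∈ range m, (t - i + 1) * ((i + a).choose a : R) =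
      (t + 1) * ((m + a).choose (a + 1) : R) - (a + 1) * ((m + a).choose (a + 2) : R) := by
  induction m with
  | zero => simp [Nat.choose_eq_zero_of_lt (by omega : a < a + 2)]
  | succ m ih =>
    have absorb : ((a : R) + 1) * ((m + a).choose (a + 1) : R) = m * ((m + a).choose a : R) := by
      simpa using congrArg (Nat.cast : ℕ → R) (Nat.succ_mul_add_choose_succ m a)
    rw [sum_range_succ, ih, Nat.add_right_comm m 1 a, Nat.choose_succ_succ' (m + a) a,
      Nat.choose_succ_succ' (m + a) (a + 1)]
    push_cast at absorb ⊢
    linear_combination absorb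

theorem cConst_one_eq_sum {n m t : ℕ} (hn : 2 ≤ n) (hmt : m ≤ t) :
    (cConst n 1 m t : ℤ) =
      ∑ i ∈ range m, ((t : ℤ) - i + 1) * ((i + (n - 2)).choose (n - 2) : ℤ) := by
  rw [cConst, Nat.cast_sum]
  refine sum_congr rfl fun i hi => ?_
  have hit : i ≤ t := (mem_range.mp hi).le.trans hmt
  rw [Nat.choose_one_right, show i + n - 1 - 1 = i + (n - 2) by omega,
    show n - 1 - 1 = n - 2 by omega]
  push_cast [hit]
  ring

/-- For all integers `a ≥ 0`, `m ≥ 1` and every integer `t`,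
`Σ_{i=0}^{m−1} (t−i+1)·C(i+a, a) = (t+1)·C(m+a, a+1) − (a+1)·C(m+a, a+2)`.
Consequently, for integers `n ≥ 2` and `t ≥ m ≥ 1`,
`c_{n,1,m,t} = (t+1)·C(m+n−2, n−1) − (n−1)·C(m+n−2, n)`. -/
theorem stmt_15 :
    (∀ (a m : ℕ), 1 ≤ m → ∀ t : ℤ,
      ∑ i ∈ Finset.range m, (t - (i : ℤ) + 1) * (Nat.choose (i + a) a : ℤ) =
        (t + 1) * (Nat.choose (m + a) (a + 1) : ℤ)
          - ((a : ℤ) + 1) * (Nat.choose (m + a) (a + 2) : ℤ)) ∧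
    (∀ (n m t : ℕ), 2 ≤ n → 1 ≤ m → m ≤ t →
      (cConst n 1 m t : ℤ) =
        ((t : ℤ) + 1) * (Nat.choose (m + n - 2) (n - 1) : ℤ)
          - ((n : ℤ) - 1) * (Nat.choose (m + n - 2) n : ℤ)) := by
  refine ⟨fun a m _ t => sum_range_sub_add_one_mul_choose a m t, fun n m t hn _ hmt => ?_⟩
  obtain ⟨a, rfl⟩ := Nat.exists_eq_add_of_le' hn
  rw [cConst_one_eq_sum hn hmt, sum_range_sub_add_one_mul_choose,
    show m + (a + 2) - 2 = m + (a + 2 - 2) by omega]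
  push_cast
  ring
end

section
/- For every integer r ≥ 1, the number 2 is the largest real root of the polynomial Λ_{2r+1,r,2}(x) = (1/(2r+1)!)·(x^{2r+1} − 2·Σ_{j=0}^{r} C(2r+1, j)·(x−1)^j); that is, Λ_{2r+1,r,2}(2) = 0 and Λ_{2r+1,r,2}(x) ≠ 0 for every real x > 2. In particular g_{2r+1,r,2} = 2. -/
open Finset

theorem Finset.sum_range_two_mul_add_two_eq_sum_add_reflect {M : Type*} [AddCommMonoid M]
    (r : ℕ) (g : ℕ → M) :
    ∑ k ∈ range (2 * r + 2), g k = ∑ j ∈ range (r + 1), (g j + g (2 * r + 1 - j)) := by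
  rw [show 2 * r + 2 = (r + 1) + (r + 1) by ring, sum_range_add, sum_add_distrib,
    ← sum_range_reflect (fun j => g (r + 1 + j)) (r + 1)]
  congr 1
  refine sum_congr rfl fun j hj => congr_arg g ?_
  have := mem_range.mp hj
  omega

theorem add_one_pow_two_mul_add_one {R : Type*} [CommSemiring R] (r : ℕ) (t : R) :
    (t + 1) ^ (2 * r + 1) =
      ∑ j ∈ range (r + 1), ((2 * r + 1).choose j : R) * (t ^ (2 * r + 1 - j) + t ^ j) := by
  rw [add_pow, sum_range_two_mul_add_two_eq_sum_add_reflect]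
  refine sum_congr rfl fun j hj => ?_
  rw [Nat.choose_symm (by have := mem_range.mp hj; omega)]
  simp only [one_pow, mul_one]
  ring

theorem factorial_mul_Lam_two_mul_add_one (r : ℕ) (x : ℝ) :
    ((2 * r + 1).factorial : ℝ) * Lam (2 * r + 1) r 2 x =
      ∑ j ∈ range (r + 1),
        ((2 * r + 1).choose j : ℝ) * ((x - 1) ^ (2 * r + 1 - j) - (x - 1) ^ j) := by
  have hfac : ((2 * r + 1).factorial : ℝ) ≠ 0 := by positivity
  rw [Lam, ← mul_assoc, mul_one_div_cancel hfac, one_mul,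
    show x = (x - 1) + 1 by ring, add_one_pow_two_mul_add_one, add_sub_cancel_right,
    mul_sum, ← sum_sub_distrib]
  refine sum_congr rfl fun j _ => ?_
  push_cast
  ring

theorem stmt_19_general (r : ℕ) :
    Lam (2 * r + 1) r 2 2 = 0 ∧ ∀ x : ℝ, 2 < x → Lam (2 * r + 1) r 2 x ≠ 0 := by
  constructor
  · have h := factorial_mul_Lam_two_mul_add_one r 2
    norm_num at h
    exact h.resolve_left (Nat.factorial_ne_zero _)
  · intro x hx
    have hpos : 0 < ∑ j ∈ range (r + 1),
        ((2 * r + 1).choose j : ℝ) * ((x - 1) ^ (2 * r + 1 - j) - (x - 1) ^ j) := by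
      refine sum_pos (fun j hj => mul_pos ?_ (sub_pos.mpr ?_)) nonempty_range_add_one
      · exact_mod_cast Nat.choose_pos (by have := mem_range.mp hj; omega)
      · exact pow_lt_pow_right₀ (by linarith) (by have := mem_range.mp hj; omega)
    rw [← factorial_mul_Lam_two_mul_add_one] at hpos
    exact right_ne_zero_of_mul hpos.ne'

/-- For every integer `r ≥ 1`, the number `2` is the largest real root of
`Λ_{2r+1,r,2}`; that is, `Λ_{2r+1,r,2}(2) = 0` and `Λ_{2r+1,r,2}(x) ≠ 0` for every real
`x > 2`. In particular `g_{2r+1,r,2} = 2`. -/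
theorem stmt_19 (r : ℕ) (hr : 1 ≤ r) :
    Lam (2 * r + 1) r 2 2 = 0 ∧ ∀ x : ℝ, 2 < x → Lam (2 * r + 1) r 2 x ≠ 0 :=
  stmt_19_general r
end
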